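/- arXiv:1603.05398 — 13 statements merged into one kernel-verified Lean document; each statement's English description precedes it below -/
import Mathlib

section
/- Let N ≥ 1, let α ∈ (0,1), and let T : ℝ^N → ℝ^N be an α-averaged operator with Fix T ≠ ∅. Let (γ_k)_{k≥0} be a real sequence with 0 ≤ γ_k ≤ γ̄ < 1 for all k, for some constant γ̄. Let (x_k) be defined by x_{−1} = x₀ ∈ ℝ^N and x_{k+1} = T(x_k + γ_k·(x_k − x_{k−1})). If in addition Σ_{k≥1} γ_k·‖x_k − x_{k−1}‖² < ∞, then (x_k) converges to a point of Fix T. -/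
/-! For a fixed point `z`, expanding `‖y_k - z‖²` at the extrapolated point
`y_k = x_k + γ_k (x_k - x_{k-1})` shows that `φ_k = ‖x_k - z‖²` satisfies
`φ_{k+1} - φ_k ≤ γ_k (φ_k - φ_{k-1}) + δ_k` with `δ_k = 2 γ_k ‖x_k - x_{k-1}‖²` summable,
and since `γ_k ≤ γ̄ < 1` the positive parts of the increments of `φ` are summable, so `φ`
converges (Alvarez–Attouch). The same estimate, with the averagedness term kept, forces the
residuals `y_k - T y_k` to vanish, so every cluster point of `(x_k)` is a fixed point.
Opial's argument in finite dimension then gives convergence of the whole sequence. -/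

open Filter Topology

/-- `T` is an `α`-averaged operator on `ℝ^N` (Euclidean norm). -/
def IsAveragedOp {N : ℕ} (α : ℝ)
    (T : EuclideanSpace ℝ (Fin N) → EuclideanSpace ℝ (Fin N)) : Prop :=
  ∀ x y : EuclideanSpace ℝ (Fin N),
    ‖T x - T y‖ ^ 2 + ((1 - α) / α) * ‖(x - T x) - (y - T y)‖ ^ 2 ≤ ‖x - y‖ ^ 2

theorem summable_of_le_mul_add {c : ℝ} (hc : c < 1) {θ δ : ℕ → ℝ}
    (hθ : ∀ k, 0 ≤ θ k) (hδ : ∀ k, 0 ≤ δ k) (hδsum : Summable δ)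
    (hrec : ∀ k, θ (k + 1) ≤ c * θ k + δ k) : Summable θ := by
  set s : ℕ → ℝ := fun n => ∑ k ∈ Finset.range n, θ k
  have hD : ∀ n, ∑ k ∈ Finset.range n, δ k ≤ ∑' k, δ k :=
    fun n => hδsum.sum_le_tsum _ fun k _ => hδ k
  have hs_mono : ∀ n, s n ≤ s (n + 1) := fun n => by
    simp only [s, Finset.sum_range_succ]; linarith [hθ n]
  have hshift : ∀ n, s (n + 1) ≤ θ 0 + c * s n + ∑' k, δ k := fun n =>
    calc s (n + 1) = ∑ k ∈ Finset.range n, θ (k + 1) + θ 0 := Finset.sum_range_succ' θ n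
      _ ≤ ∑ k ∈ Finset.range n, (c * θ k + δ k) + θ 0 := by
        gcongr with k; exact hrec k
      _ ≤ θ 0 + c * s n + ∑' k, δ k := by
        rw [Finset.sum_add_distrib, ← Finset.mul_sum]; linarith [hD n]
  refine summable_of_sum_range_le hθ (c := (θ 0 + ∑' k, δ k) / (1 - c)) fun n => ?_
  rw [le_div_iff₀ (by linarith)]
  linarith [hshift n, hs_mono n]

theorem exists_tendsto_of_sub_le_summable {φ θ : ℕ → ℝ} (hφ : BddBelow (Set.range φ))
    (hθ : Summable θ) (hle : ∀ k, φ (k + 1) - φ k ≤ θ k) : ∃ L, Tendsto φ atTop (𝓝 L) := by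
  set S : ℕ → ℝ := fun n => ∑ k ∈ Finset.range n, θ k
  have hS : Tendsto S atTop (𝓝 (∑' k, θ k)) := hθ.hasSum.tendsto_sum_nat
  have hanti : Antitone fun n => φ n - S n := antitone_nat_of_succ_le fun n => by
    simp only [S, Finset.sum_range_succ]; linarith [hle n]
  have hbdd : BddBelow (Set.range fun n => φ n - S n) := by
    obtain ⟨m, hm⟩ := hφ
    obtain ⟨B, hB⟩ := hS.bddAbove_range
    refine ⟨m - B, ?_⟩
    rintro _ ⟨n, rfl⟩
    linarith [hm ⟨n, rfl⟩, hB ⟨n, rfl⟩]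
  refine ⟨_, ((tendsto_atTop_ciInf hanti hbdd).add hS).congr fun n => ?_⟩
  ring

/-- Alvarez–Attouch. -/
theorem exists_tendsto_of_sub_le_inertial {φ γ δ : ℕ → ℝ} {γbar : ℝ} (hφ : ∀ k, 0 ≤ φ k)
    (hγ : ∀ k, 0 ≤ γ k ∧ γ k ≤ γbar) (hγbar : γbar < 1) (hδ : ∀ k, 0 ≤ δ k)
    (hδsum : Summable δ) (hle : ∀ k, φ (k + 1) - φ k ≤ γ k * (φ k - φ (k - 1)) + δ k) :
    ∃ L, Tendsto φ atTop (𝓝 L) := by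
  set θ : ℕ → ℝ := fun k => max (φ (k + 1) - φ k) 0
  have hθ : ∀ k, 0 ≤ θ k := fun k => le_max_right _ _
  have hγbar0 : 0 ≤ γbar := (hγ 0).1.trans (hγ 0).2
  have hθrec : ∀ k, θ (k + 1) ≤ γbar * θ k + δ (k + 1) := fun k => by
    have h := hle (k + 1)
    rw [Nat.add_sub_cancel] at h
    have hinertia : γ (k + 1) * (φ (k + 1) - φ k) ≤ γbar * θ k :=
      (mul_le_mul_of_nonneg_left (le_max_left _ _) (hγ (k + 1)).1).trans
        (mul_le_mul_of_nonneg_right (hγ (k + 1)).2 (hθ k))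
    exact max_le (by linarith) (add_nonneg (mul_nonneg hγbar0 (hθ k)) (hδ _))
  have hθsum : Summable θ := summable_of_le_mul_add hγbar hθ (fun k => hδ (k + 1))
    ((summable_nat_add_iff 1).2 hδsum) hθrec
  exact exists_tendsto_of_sub_le_summable ⟨0, by rintro _ ⟨k, rfl⟩; exact hφ k⟩ hθsum
    fun k => le_max_left _ _

theorem exists_tendsto_mem_of_tendsto_dist {X : Type*} [PseudoMetricSpace X] [ProperSpace X]
    {F : Set X} {u : ℕ → X} (hF : F.Nonempty)
    (hdist : ∀ z ∈ F, ∃ L, Tendsto (fun k => dist (u k) z) atTop (𝓝 L))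
    (hclust : ∀ p (ψ : ℕ → ℕ), StrictMono ψ → Tendsto (u ∘ ψ) atTop (𝓝 p) → p ∈ F) :
    ∃ p ∈ F, Tendsto u atTop (𝓝 p) := by
  obtain ⟨z, hz⟩ := hF
  obtain ⟨R, hR⟩ := (hdist z hz).choose_spec.bddAbove_range
  obtain ⟨p, -, ψ, hψ, hup⟩ := tendsto_subseq_of_bounded Metric.isBounded_closedBall
    fun k => Metric.mem_closedBall.2 (hR ⟨k, rfl⟩)
  have hp := hclust p ψ hψ hup
  obtain ⟨L, hL⟩ := hdist p hp
  have hL0 : L = 0 :=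
    tendsto_nhds_unique (hL.comp hψ.tendsto_atTop) (tendsto_iff_dist_tendsto_zero.1 hup)
  exact ⟨p, hp, tendsto_iff_dist_tendsto_zero.2 (hL0 ▸ hL)⟩

theorem Filter.Tendsto.isFixedPt_of_tendsto_sub {E ι : Type*} [TopologicalSpace E] [AddCommGroup E]
    [IsTopologicalAddGroup E] [T2Space E] {l : Filter ι} [l.NeBot] {T : E → E}
    (hT : Continuous T) {u : ι → E} {p : E} (hu : Tendsto u l (𝓝 p))
    (hres : Tendsto (fun i => u i - T (u i)) l (𝓝 0)) : Function.IsFixedPt T p :=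
  tendsto_nhds_unique ((hT.tendsto p).comp hu) (by simpa [Function.comp_def] using hu.sub hres)

theorem tendsto_zero_of_tendsto_norm_sq {E ι : Type*} [SeminormedAddCommGroup E] {l : Filter ι}
    {u : ι → E} (h : Tendsto (fun i => ‖u i‖ ^ 2) l (𝓝 0)) : Tendsto u l (𝓝 0) :=
  tendsto_zero_iff_norm_tendsto_zero.2 <| by simpa [Real.sqrt_sq (norm_nonneg _)] using h.sqrt

theorem tendsto_smul_of_summable_mul_sq {E : Type*} [SeminormedAddCommGroup E]
    [NormedSpace ℝ E] {γ : ℕ → ℝ} {d : ℕ → E} (hγ : ∀ k, 0 ≤ γ k ∧ γ k ≤ 1)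
    (hsum : Summable fun k => γ k * ‖d k‖ ^ 2) : Tendsto (fun k => γ k • d k) atTop (𝓝 0) := by
  refine tendsto_zero_of_tendsto_norm_sq <|
    squeeze_zero (fun _ => sq_nonneg _) (fun k => ?_) hsum.tendsto_atTop_zero
  rw [norm_smul, Real.norm_of_nonneg (hγ k).1, mul_pow, sq, mul_assoc]
  exact mul_le_of_le_one_left (by have := (hγ k).1; positivity) (hγ k).2

theorem norm_add_smul_sub_sq {E : Type*} [NormedAddCommGroup E] [InnerProductSpace ℝ E]
    (a b : E) (g : ℝ) :
    ‖a + g • (a - b)‖ ^ 2 = ‖a‖ ^ 2 + g * (‖a‖ ^ 2 - ‖b‖ ^ 2) + (g + g ^ 2) * ‖a - b‖ ^ 2 := by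
  rw [norm_add_sq_real, norm_smul, real_inner_smul_right, inner_sub_right,
    real_inner_self_eq_norm_sq, mul_pow, Real.norm_eq_abs, sq_abs]
  linear_combination (-g) * norm_sub_sq_real a b

-- `x (0 - 1) = x 0` in `ℕ`, which is the convention `x₋₁ = x₀`.
def inertialPoint {E : Type*} [AddCommGroup E] [Module ℝ E] (γ : ℕ → ℝ) (x : ℕ → E) (k : ℕ) :
    E :=
  x k + γ k • (x k - x (k - 1))

namespace IsAveragedOp

variable {N : ℕ} {α : ℝ} {T : EuclideanSpace ℝ (Fin N) → EuclideanSpace ℝ (Fin N)}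

theorem lipschitzWith_one (hT : IsAveragedOp α T) (hα : α ∈ Set.Ioc 0 1) :
    LipschitzWith 1 T := by
  refine LipschitzWith.of_dist_le_mul fun a b => ?_
  rw [NNReal.coe_one, one_mul, dist_eq_norm, dist_eq_norm,
    ← pow_le_pow_iff_left₀ (norm_nonneg _) (norm_nonneg _) two_ne_zero]
  have hc : 0 ≤ (1 - α) / α := div_nonneg (sub_nonneg.2 hα.2) hα.1.le
  linarith [hT a b, mul_nonneg hc (sq_nonneg ‖(a - T a) - (b - T b)‖)]

theorem sq_norm_apply_sub_add_le (hT : IsAveragedOp α T) {z : EuclideanSpace ℝ (Fin N)}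
    (hz : T z = z) {g : ℝ} (hg : 0 ≤ g ∧ g ≤ 1) (u v : EuclideanSpace ℝ (Fin N)) :
    ‖T (u + g • (u - v)) - z‖ ^ 2 + (1 - α) / α * ‖u + g • (u - v) - T (u + g • (u - v))‖ ^ 2
      ≤ ‖u - z‖ ^ 2 + g * (‖u - z‖ ^ 2 - ‖v - z‖ ^ 2) + 2 * g * ‖u - v‖ ^ 2 := by
  have h := hT (u + g • (u - v)) z
  rw [hz, sub_self, sub_zero] at h
  have hexpand := norm_add_smul_sub_sq (u - z) (v - z) g
  rw [sub_sub_sub_cancel_right, sub_add_eq_add_sub] at hexpand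
  have hg2 : (g + g ^ 2) * ‖u - v‖ ^ 2 ≤ 2 * g * ‖u - v‖ ^ 2 :=
    mul_le_mul_of_nonneg_right (by nlinarith) (sq_nonneg _)
  linarith

variable {γ : ℕ → ℝ} {γbar : ℝ} {x : ℕ → EuclideanSpace ℝ (Fin N)}

theorem exists_tendsto_norm_sub_of_inertial (hT : IsAveragedOp α T) (hα : α ∈ Set.Ioc 0 1)
    (hγ : ∀ k, 0 ≤ γ k ∧ γ k ≤ γbar) (hγbar : γbar < 1)
    (hx : ∀ k, x (k + 1) = T (inertialPoint γ x k))
    (hsum : Summable fun k => γ k * ‖x k - x (k - 1)‖ ^ 2)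
    {z : EuclideanSpace ℝ (Fin N)} (hz : T z = z) :
    ∃ L, Tendsto (fun k => ‖x k - z‖) atTop (𝓝 L) := by
  have hc : 0 ≤ (1 - α) / α := div_nonneg (sub_nonneg.2 hα.2) hα.1.le
  obtain ⟨L, hL⟩ : ∃ L, Tendsto (fun k => ‖x k - z‖ ^ 2) atTop (𝓝 L) := by
    refine exists_tendsto_of_sub_le_inertial (fun k => sq_nonneg _) hγ hγbar
      (fun k => mul_nonneg zero_le_two (mul_nonneg (hγ k).1 (sq_nonneg _))) (hsum.mul_left 2)
      fun k => ?_
    have h := hT.sq_norm_apply_sub_add_le hz ⟨(hγ k).1, (hγ k).2.trans hγbar.le⟩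
      (x k) (x (k - 1))
    rw [← inertialPoint, ← hx] at h
    linarith [mul_nonneg hc (sq_nonneg ‖inertialPoint γ x k - x (k + 1)‖)]
  exact ⟨_, by simpa [Real.sqrt_sq (norm_nonneg _)] using hL.sqrt⟩

theorem tendsto_sub_apply_inertialPoint (hT : IsAveragedOp α T) (hα : α ∈ Set.Ioo 0 1)
    (hγ : ∀ k, 0 ≤ γ k ∧ γ k ≤ γbar) (hγbar : γbar < 1)
    (hx : ∀ k, x (k + 1) = T (inertialPoint γ x k))
    (hsum : Summable fun k => γ k * ‖x k - x (k - 1)‖ ^ 2)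
    {z : EuclideanSpace ℝ (Fin N)} (hz : T z = z) :
    Tendsto (fun k => inertialPoint γ x k - T (inertialPoint γ x k)) atTop (𝓝 0) := by
  obtain ⟨L, hL⟩ :=
    hT.exists_tendsto_norm_sub_of_inertial (Set.Ioo_subset_Ioc_self hα) hγ hγbar hx hsum hz
  set φ : ℕ → ℝ := fun k => ‖x k - z‖ ^ 2
  have hφ : Tendsto φ atTop (𝓝 (L ^ 2)) := hL.pow 2
  set c := (1 - α) / α
  have hc : 0 < c := div_pos (sub_pos.2 hα.2) hα.1
  have hbound : ∀ k, c * ‖inertialPoint γ x k - T (inertialPoint γ x k)‖ ^ 2 ≤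
      (φ k - φ (k + 1)) + γ k * (φ k - φ (k - 1)) + 2 * (γ k * ‖x k - x (k - 1)‖ ^ 2) := by
    intro k
    have h := hT.sq_norm_apply_sub_add_le hz ⟨(hγ k).1, (hγ k).2.trans hγbar.le⟩
      (x k) (x (k - 1))
    rw [← inertialPoint] at h
    nth_rewrite 1 [← hx k] at h
    linarith
  have hdescent : Tendsto (fun k => φ k - φ (k + 1)) atTop (𝓝 0) := by
    simpa using hφ.sub (hφ.comp (tendsto_add_atTop_nat 1))
  have hinertia : Tendsto (fun k => γ k * (φ k - φ (k - 1))) atTop (𝓝 0) := by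
    refine squeeze_zero_norm (fun k => ?_) (by simpa using (hφ.sub (hφ.comp
      (tendsto_sub_atTop_nat 1))).norm)
    rw [norm_mul]
    refine mul_le_of_le_one_left (norm_nonneg _) ?_
    rw [Real.norm_of_nonneg (hγ k).1]
    exact (hγ k).2.trans hγbar.le
  have hsq := squeeze_zero (fun k => by positivity) hbound
    (by simpa using (hdescent.add hinertia).add (hsum.mul_left 2).tendsto_atTop_zero)
  refine tendsto_zero_of_tendsto_norm_sq ?_
  simpa [inv_mul_cancel_left₀ hc.ne'] using hsq.const_mul c⁻¹

end IsAveragedOp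

theorem stmt_1_general {N : ℕ} {α : ℝ} (hα : α ∈ Set.Ioo (0 : ℝ) 1)
    (T : EuclideanSpace ℝ (Fin N) → EuclideanSpace ℝ (Fin N))
    (hT : IsAveragedOp α T) (hfix : ∃ z, T z = z)
    (γ : ℕ → ℝ) (γbar : ℝ) (hγbar : γbar < 1)
    (hγ : ∀ k, 0 ≤ γ k ∧ γ k ≤ γbar)
    (x : ℕ → EuclideanSpace ℝ (Fin N))
    -- first step, with the convention `x_{-1} = x₀`:
    (hx1 : x 1 = T (x 0 + γ 0 • (x 0 - x 0)))
    (hrec : ∀ k, x (k + 2) = T (x (k + 1) + γ (k + 1) • (x (k + 1) - x k)))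
    (hsum : Summable (fun k : ℕ => γ (k + 1) * ‖x (k + 1) - x k‖ ^ 2)) :
    ∃ xbar, T xbar = xbar ∧ Tendsto x atTop (𝓝 xbar) := by
  obtain ⟨z, hz⟩ := hfix
  have hx : ∀ k, x (k + 1) = T (inertialPoint γ x k) := by
    rintro (_ | k)
    · exact hx1
    · exact hrec k
  have hsum' : Summable fun k => γ k * ‖x k - x (k - 1)‖ ^ 2 :=
    (summable_nat_add_iff 1).1 hsum
  have hres := hT.tendsto_sub_apply_inertialPoint hα hγ hγbar hx hsum' hz
  have hinertia := tendsto_smul_of_summable_mul_sq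
    (fun k => ⟨(hγ k).1, (hγ k).2.trans hγbar.le⟩) hsum'
  refine exists_tendsto_mem_of_tendsto_dist (F := Function.fixedPoints T) ⟨z, hz⟩
    (fun p hp => ?_) fun p ψ hψ hxψ => ?_
  · simpa only [dist_eq_norm] using
      hT.exists_tendsto_norm_sub_of_inertial (Set.Ioo_subset_Ioc_self hα) hγ hγbar hx hsum' hp
  · have hyψ : Tendsto (inertialPoint γ x ∘ ψ) atTop (𝓝 (p + 0)) :=
      hxψ.add (hinertia.comp hψ.tendsto_atTop)
    rw [add_zero] at hyψ
    exact hyψ.isFixedPt_of_tendsto_sub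
      (hT.lipschitzWith_one (Set.Ioo_subset_Ioc_self hα)).continuous (hres.comp hψ.tendsto_atTop)

/-- Inertial iterations `x_{k+1} = T(x_k + γ_k (x_k − x_{k−1}))` (with `x_{−1} = x₀`)
converge when `0 ≤ γ_k ≤ γ̄ < 1` and `∑ γ_k ‖x_k − x_{k−1}‖² < ∞`. -/
theorem stmt_1 {N : ℕ} (hN : 1 ≤ N) {α : ℝ} (hα : α ∈ Set.Ioo (0 : ℝ) 1)
    (T : EuclideanSpace ℝ (Fin N) → EuclideanSpace ℝ (Fin N))
    (hT : IsAveragedOp α T) (hfix : ∃ z, T z = z)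
    (γ : ℕ → ℝ) (γbar : ℝ) (hγbar : γbar < 1)
    (hγ : ∀ k, 0 ≤ γ k ∧ γ k ≤ γbar)
    (x₀ : EuclideanSpace ℝ (Fin N)) (x : ℕ → EuclideanSpace ℝ (Fin N))
    (hx0 : x 0 = x₀)
    -- first step, with the convention `x_{-1} = x₀`:
    (hx1 : x 1 = T (x 0 + γ 0 • (x 0 - x 0)))
    (hrec : ∀ k, x (k + 2) = T (x (k + 1) + γ (k + 1) • (x (k + 1) - x k)))
    (hsum : Summable (fun k : ℕ => γ (k + 1) * ‖x (k + 1) - x k‖ ^ 2)) :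
    ∃ xbar, T xbar = xbar ∧ Tendsto x atTop (𝓝 xbar) :=
  stmt_1_general hα T hT hfix γ γbar hγbar hγ x hx1 hrec hsum
end

section
/- Let N ≥ 1, let α ∈ (0,1), and let T : ℝ^N → ℝ^N be an α-averaged operator with Fix T ≠ ∅. Let γ̄ < 1 and let (γ_k)_{k≥0} be a non-decreasing sequence in [0, γ̄) such that there exists m > 0 with 1 − γ_{k−1} − (1 − γ_k)·γ_k − (α/(1−α))·γ_k·(1 + γ_k) ≥ m for all k > 1. Then the sequence defined by x_{−1} = x₀ ∈ ℝ^N and x_{k+1} = T(x_k + γ_k·(x_k − x_{k−1})) converges to a point of Fix T. -/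
/-!
Put `c = (1 - α) / α`. For every fixed point `z`, the sequence `φ_k = ‖x_k - z‖²` satisfies
`φ_{k+1} - φ_k - γ_k (φ_k - φ_{k-1})
  ≤ (γ_k (1 + γ_k) + c γ_k (1 - γ_k)) ‖x_k - x_{k-1}‖² - c (1 - γ_k) ‖x_{k+1} - x_k‖²`.
The condition on `(γ_k)` and its monotonicity make the energy
`φ_k - γ_k φ_{k-1} + c (1 - γ_{k-1}) ‖x_k - x_{k-1}‖²` drop by at least `c m ‖x_k - x_{k-1}‖²`
per step, so the iterates are bounded and the squared steps are summable. Then the residuals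
`x_k - T x_k` tend to `0`, and by compactness some subsequence converges to a fixed point `x̄`.
For `z = x̄` the inequality above is a recursion of Alvarez–Attouch type, which forces
`‖x_k - x̄‖` to converge; its limit is `0` along the subsequence.
-/

open Filter Topology

open Finset

section RealSequences

theorem summable_of_le_mul_add_s2 {θ ε : ℕ → ℝ} {q : ℝ} (hq : q < 1) (hθ : ∀ n, 0 ≤ θ n)
    (hε₀ : ∀ n, 0 ≤ ε n) (hε : Summable ε) (h : ∀ n, θ (n + 1) ≤ q * θ n + ε n) :
    Summable θ := by
  refine summable_of_sum_range_le hθ (c := (θ 0 + ∑' i, ε i) / (1 - q)) fun n => ?_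
  have hshift : ∑ i ∈ range n, θ (i + 1) ≤ q * ∑ i ∈ range n, θ i + ∑' i, ε i :=
    calc ∑ i ∈ range n, θ (i + 1) ≤ ∑ i ∈ range n, (q * θ i + ε i) := sum_le_sum fun i _ => h i
      _ = q * ∑ i ∈ range n, θ i + ∑ i ∈ range n, ε i := by rw [sum_add_distrib, mul_sum]
      _ ≤ q * ∑ i ∈ range n, θ i + ∑' i, ε i := by
        gcongr
        exact hε.sum_le_tsum _ fun i _ => hε₀ i
  have hsucc := sum_range_succ' θ n
  have hmono : ∑ i ∈ range n, θ i ≤ ∑ i ∈ range (n + 1), θ i := by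
    rw [sum_range_succ]
    linarith [hθ n]
  rw [le_div_iff₀ (by linarith)]
  linarith

theorem exists_tendsto_of_le_add_summable {φ θ : ℕ → ℝ} (hφ : ∀ n, 0 ≤ φ n) (hθ : Summable θ)
    (h : ∀ n, φ (n + 1) ≤ φ n + θ n) : ∃ L, Tendsto φ atTop (𝓝 L) := by
  have hS : Tendsto (fun n => ∑ i ∈ range n, θ i) atTop (𝓝 (∑' i, θ i)) :=
    hθ.hasSum.tendsto_sum_nat
  obtain ⟨C, hC⟩ := hS.bddAbove_range
  have hanti : Antitone fun n => φ n - ∑ i ∈ range n, θ i :=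
    antitone_nat_of_succ_le fun n => by
      rw [sum_range_succ]
      linarith [h n]
  have hbdd : BddBelow (Set.range fun n => φ n - ∑ i ∈ range n, θ i) :=
    ⟨-C, by rintro _ ⟨n, rfl⟩; linarith [hφ n, hC ⟨n, rfl⟩]⟩
  exact ⟨_, by simpa using (tendsto_atTop_ciInf hanti hbdd).add hS⟩

theorem exists_tendsto_of_inertial_le {φ γ δ : ℕ → ℝ} {q : ℝ} (hq : q < 1)
    (hφ : ∀ n, 0 ≤ φ n) (hγ : ∀ n, 0 ≤ γ n ∧ γ n ≤ q) (hδ₀ : ∀ n, 0 ≤ δ n) (hδ : Summable δ)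
    (h : ∀ n, φ (n + 2) - φ (n + 1) ≤ γ n * (φ (n + 1) - φ n) + δ n) :
    ∃ L, Tendsto φ atTop (𝓝 L) := by
  set θ : ℕ → ℝ := fun n => max (φ (n + 1) - φ n) 0
  have hθ₀ : ∀ n, 0 ≤ θ n := fun n => le_max_right _ _
  have hθ : Summable θ := by
    refine summable_of_le_mul_add_s2 hq hθ₀ hδ₀ hδ fun n => max_le ?_ ?_
    · calc φ (n + 2) - φ (n + 1) ≤ γ n * θ n + δ n := by
            have := mul_le_mul_of_nonneg_left (le_max_left (φ (n + 1) - φ n) 0) (hγ n).1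
            linarith [h n]
        _ ≤ q * θ n + δ n := by gcongr; exact (hγ n).2
    · exact add_nonneg (mul_nonneg ((hγ n).1.trans (hγ n).2) (hθ₀ n)) (hδ₀ n)
  exact exists_tendsto_of_le_add_summable hφ hθ fun n => by
    linarith [le_max_left (φ (n + 1) - φ n) 0]

theorem summable_of_add_le_of_le {a b : ℕ → ℝ} {C : ℝ} (hb : ∀ n, 0 ≤ b n)
    (h : ∀ n, a (n + 1) + b n ≤ a n) (hC : ∀ n, C ≤ a n) : Summable b := by
  refine summable_of_sum_range_le hb (c := a 0 - C) fun n => ?_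
  have htel : ∀ n, ∑ i ∈ range n, b i ≤ a 0 - a n := by
    intro n
    induction n with
    | zero => simp
    | succ n ih =>
      rw [sum_range_succ]
      linarith [h n]
  linarith [htel n, hC n]

theorem le_max_div_of_le_mul_add {a : ℕ → ℝ} {q B : ℝ} (hq₀ : 0 ≤ q) (hq : q < 1)
    (h : ∀ n, a (n + 1) ≤ q * a n + B) (n : ℕ) : a n ≤ max (a 0) (B / (1 - q)) := by
  set K := max (a 0) (B / (1 - q))
  have hK : B ≤ (1 - q) * K := (div_le_iff₀' (by linarith)).1 (le_max_right _ _)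
  induction n with
  | zero => exact le_max_left _ _
  | succ n ih =>
    calc a (n + 1) ≤ q * a n + B := h n
      _ ≤ q * K + B := by gcongr
      _ ≤ K := by linarith

end RealSequences

section Normed

variable {E : Type*} [NormedAddCommGroup E] {T : E → E} {c q : ℝ} {γ : ℕ → ℝ} {x : ℕ → E}

theorem lipschitzWith_one_of_averaged (hc : 0 ≤ c)
    (hT : ∀ a b, ‖T a - T b‖ ^ 2 + c * ‖(a - T a) - (b - T b)‖ ^ 2 ≤ ‖a - b‖ ^ 2) :
    LipschitzWith 1 T :=
  LipschitzWith.of_dist_le_mul fun a b => by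
    rw [NNReal.coe_one, one_mul, dist_eq_norm, dist_eq_norm,
      ← pow_le_pow_iff_left₀ (norm_nonneg _) (norm_nonneg _) two_ne_zero]
    nlinarith [hT a b, sq_nonneg ‖(a - T a) - (b - T b)‖]

def inertialEnergy (c : ℝ) (γ : ℕ → ℝ) (x : ℕ → E) (z : E) (n : ℕ) : ℝ :=
  ‖x (n + 1) - z‖ ^ 2 - γ (n + 1) * ‖x n - z‖ ^ 2 + c * (1 - γ n) * ‖x (n + 1) - x n‖ ^ 2

theorem exists_sq_norm_sub_le_of_inertialEnergy_le {z : E} (hc : 0 ≤ c) (hq : q < 1)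
    (hγ : ∀ n, 0 ≤ γ n ∧ γ n ≤ q)
    (hE : ∀ n, inertialEnergy c γ x z (n + 1) ≤ inertialEnergy c γ x z 1) :
    ∃ K, ∀ n, ‖x n - z‖ ^ 2 ≤ K := by
  have hq₀ : 0 ≤ q := (hγ 0).1.trans (hγ 0).2
  have hstep : ∀ n, ‖x (n + 2) - z‖ ^ 2 ≤ q * ‖x (n + 1) - z‖ ^ 2 + inertialEnergy c γ x z 1 := by
    intro n
    have hE' := hE n
    have hγφ := mul_le_mul_of_nonneg_right (hγ (n + 2)).2 (sq_nonneg ‖x (n + 1) - z‖)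
    have hD : 0 ≤ c * (1 - γ (n + 1)) * ‖x (n + 2) - x (n + 1)‖ ^ 2 :=
      mul_nonneg (mul_nonneg hc (by linarith [(hγ (n + 1)).2])) (sq_nonneg _)
    unfold inertialEnergy at hE' ⊢
    linarith
  refine ⟨max (‖x 0 - z‖ ^ 2) (max (‖x 1 - z‖ ^ 2) (inertialEnergy c γ x z 1 / (1 - q))), ?_⟩
  rintro (_ | n)
  · exact le_max_left _ _
  · exact (le_max_div_of_le_mul_add (a := fun n => ‖x (n + 1) - z‖ ^ 2) hq₀ hq hstep n).trans
      (le_max_right _ _)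

theorem tendsto_dist_apply_of_inertial [NormedSpace ℝ E] (hT : LipschitzWith 1 T)
    (hγ : ∀ n, 0 ≤ γ n ∧ γ n ≤ q)
    (hrec : ∀ k, x (k + 2) = T (x (k + 1) + γ (k + 1) • (x (k + 1) - x k)))
    (hD : Summable fun n => ‖x (n + 1) - x n‖ ^ 2) :
    Tendsto (fun n => dist (x n) (T (x n))) atTop (𝓝 0) := by
  have hstep : Tendsto (fun n => ‖x (n + 1) - x n‖) atTop (𝓝 0) := by
    simpa using hD.tendsto_atTop_zero.sqrt
  rw [← tendsto_add_atTop_iff_nat 1]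
  refine squeeze_zero (fun n => dist_nonneg)
    (g := fun n => ‖x (n + 2) - x (n + 1)‖ + q * ‖x (n + 1) - x n‖) (fun n => ?_) ?_
  · have hT' := hT.norm_sub_le (x (n + 1) + γ (n + 1) • (x (n + 1) - x n)) (x (n + 1))
    rw [← hrec n, add_sub_cancel_left, norm_smul, Real.norm_of_nonneg (hγ (n + 1)).1,
      NNReal.coe_one, one_mul] at hT'
    have hγq := mul_le_mul_of_nonneg_right (hγ (n + 1)).2 (norm_nonneg (x (n + 1) - x n))
    calc dist (x (n + 1)) (T (x (n + 1)))
        ≤ ‖x (n + 1) - x (n + 2)‖ + ‖x (n + 2) - T (x (n + 1))‖ := by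
          rw [dist_eq_norm]; exact norm_sub_le_norm_sub_add_norm_sub _ _ _
      _ ≤ ‖x (n + 2) - x (n + 1)‖ + q * ‖x (n + 1) - x n‖ := by
          rw [norm_sub_rev (x (n + 1))]; linarith
  · simpa using (hstep.comp (tendsto_add_atTop_nat 1)).add (hstep.const_mul q)

end Normed

theorem exists_fixedPoint_tendsto_subseq {X : Type*} [MetricSpace X] [ProperSpace X] {T : X → X}
    (hT : Continuous T) {x : ℕ → X} (hx : Bornology.IsBounded (Set.range x))
    (hres : Tendsto (fun n => dist (x n) (T (x n))) atTop (𝓝 0)) :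
    ∃ x', T x' = x' ∧ ∃ σ : ℕ → ℕ, StrictMono σ ∧ Tendsto (x ∘ σ) atTop (𝓝 x') := by
  obtain ⟨x', -, σ, hσ, hlim⟩ := tendsto_subseq_of_bounded hx (Set.mem_range_self ·)
  have hdist : Tendsto (fun n => dist (x (σ n)) (T (x (σ n)))) atTop (𝓝 (dist x' (T x'))) :=
    hlim.dist ((hT.tendsto x').comp hlim)
  exact ⟨x', (dist_eq_zero.1 (tendsto_nhds_unique hdist (hres.comp hσ.tendsto_atTop))).symm, σ,
    hσ, hlim⟩

section InnerProduct

variable {E : Type*} [NormedAddCommGroup E] [InnerProductSpace ℝ E]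

/- Expanding the squares leaves the cross term `2 c g ⟪w - u, u - v⟫`, which Cauchy–Schwarz and
`2ab ≤ a² + b²` bound by `c g (‖w - u‖² + ‖u - v‖²)`. -/
theorem inertial_step_sq_norm_le {c g : ℝ} (hc : 0 ≤ c) (hg : 0 ≤ g) {u v w z : E}
    (h : ‖w - z‖ ^ 2 + c * ‖u + g • (u - v) - w‖ ^ 2 ≤ ‖u + g • (u - v) - z‖ ^ 2) :
    ‖w - z‖ ^ 2 - ‖u - z‖ ^ 2 - g * (‖u - z‖ ^ 2 - ‖v - z‖ ^ 2)
      ≤ (g * (1 + g) + c * g * (1 - g)) * ‖u - v‖ ^ 2 - c * (1 - g) * ‖w - u‖ ^ 2 := by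
  have hsmul : ‖g • (u - v)‖ ^ 2 = g ^ 2 * ‖u - v‖ ^ 2 := by
    rw [norm_smul, mul_pow, Real.norm_eq_abs, sq_abs]
  have hyz : ‖u + g • (u - v) - z‖ ^ 2
      = ‖u - z‖ ^ 2 + 2 * (g * inner ℝ (u - z) (u - v)) + g ^ 2 * ‖u - v‖ ^ 2 := by
    rw [show u + g • (u - v) - z = (u - z) + g • (u - v) by abel, norm_add_sq_real,
      real_inner_smul_right, hsmul]
  have hvz : ‖v - z‖ ^ 2 = ‖u - z‖ ^ 2 - 2 * inner ℝ (u - z) (u - v) + ‖u - v‖ ^ 2 := by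
    rw [show v - z = (u - z) - (u - v) by abel, norm_sub_sq_real]
  have hyw : ‖u + g • (u - v) - w‖ ^ 2
      = ‖w - u‖ ^ 2 - 2 * (g * inner ℝ (w - u) (u - v)) + g ^ 2 * ‖u - v‖ ^ 2 := by
    rw [show u + g • (u - v) - w = g • (u - v) - (w - u) by abel, norm_sub_sq_real, hsmul,
      real_inner_smul_left, real_inner_comm (u - v)]
    ring
  have hcross : 2 * inner ℝ (w - u) (u - v) ≤ ‖w - u‖ ^ 2 + ‖u - v‖ ^ 2 := by
    nlinarith [real_inner_le_norm (w - u) (u - v), sq_nonneg (‖w - u‖ - ‖u - v‖)]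
  rw [hyz, hyw] at h
  rw [hvz]
  nlinarith [mul_nonneg (mul_nonneg hc hg) (sub_nonneg.2 hcross)]

variable {T : E → E} {c q m : ℝ} {γ : ℕ → ℝ} {x : ℕ → E} {z : E}

theorem inertial_sq_norm_sub_le (hc : 0 ≤ c) (hγ : ∀ n, 0 ≤ γ n)
    (hz : ∀ y, ‖T y - z‖ ^ 2 + c * ‖y - T y‖ ^ 2 ≤ ‖y - z‖ ^ 2)
    (hrec : ∀ k, x (k + 2) = T (x (k + 1) + γ (k + 1) • (x (k + 1) - x k))) (n : ℕ) :
    ‖x (n + 2) - z‖ ^ 2 - ‖x (n + 1) - z‖ ^ 2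
        - γ (n + 1) * (‖x (n + 1) - z‖ ^ 2 - ‖x n - z‖ ^ 2)
      ≤ (γ (n + 1) * (1 + γ (n + 1)) + c * γ (n + 1) * (1 - γ (n + 1))) * ‖x (n + 1) - x n‖ ^ 2
        - c * (1 - γ (n + 1)) * ‖x (n + 2) - x (n + 1)‖ ^ 2 :=
  inertial_step_sq_norm_le hc (hγ (n + 1)) (by rw [hrec n]; exact hz _)

theorem inertialEnergy_succ_add_le (hc : 0 < c) (hγ : ∀ n, 0 ≤ γ n) (hmono : Monotone γ)
    (hz : ∀ y, ‖T y - z‖ ^ 2 + c * ‖y - T y‖ ^ 2 ≤ ‖y - z‖ ^ 2)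
    (hrec : ∀ k, x (k + 2) = T (x (k + 1) + γ (k + 1) • (x (k + 1) - x k))) {n : ℕ}
    (hcond : m ≤ 1 - γ n - (1 - γ (n + 1)) * γ (n + 1) - c⁻¹ * γ (n + 1) * (1 + γ (n + 1))) :
    inertialEnergy c γ x z (n + 1) + c * m * ‖x (n + 1) - x n‖ ^ 2
      ≤ inertialEnergy c γ x z n := by
  have hstep := inertial_sq_norm_sub_le hc.le hγ hz hrec n
  have hcond' : c * m + γ (n + 1) * (1 + γ (n + 1)) + c * γ (n + 1) * (1 - γ (n + 1))
      ≤ c * (1 - γ n) := by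
    have hinv : c * (c⁻¹ * γ (n + 1) * (1 + γ (n + 1))) = γ (n + 1) * (1 + γ (n + 1)) := by
      field_simp
    linarith [mul_le_mul_of_nonneg_left hcond hc.le]
  have hD := mul_le_mul_of_nonneg_right hcond' (sq_nonneg ‖x (n + 1) - x n‖)
  have hγφ := mul_le_mul_of_nonneg_right (hmono (Nat.le_succ (n + 1)))
    (sq_nonneg ‖x (n + 1) - z‖)
  unfold inertialEnergy
  linarith

theorem isBounded_range_and_summable_of_inertial (hc : 0 < c) (hm : 0 < m) (hq : q < 1)
    (hγ : ∀ n, 0 ≤ γ n ∧ γ n ≤ q) (hmono : Monotone γ)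
    (hz : ∀ y, ‖T y - z‖ ^ 2 + c * ‖y - T y‖ ^ 2 ≤ ‖y - z‖ ^ 2)
    (hrec : ∀ k, x (k + 2) = T (x (k + 1) + γ (k + 1) • (x (k + 1) - x k)))
    (hcond : ∀ n, m ≤ 1 - γ (n + 1) - (1 - γ (n + 2)) * γ (n + 2)
      - c⁻¹ * γ (n + 2) * (1 + γ (n + 2))) :
    Bornology.IsBounded (Set.range x) ∧ Summable fun n => ‖x (n + 1) - x n‖ ^ 2 := by
  set M := inertialEnergy c γ x z
  have hdec : ∀ n, M (n + 2) + c * m * ‖x (n + 2) - x (n + 1)‖ ^ 2 ≤ M (n + 1) := fun n =>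
    inertialEnergy_succ_add_le hc (fun k => (hγ k).1) hmono hz hrec (hcond n)
  have hcm : 0 < c * m := mul_pos hc hm
  have hanti : Antitone fun n => M (n + 1) := antitone_nat_of_succ_le fun n => by
    nlinarith [hdec n, sq_nonneg ‖x (n + 2) - x (n + 1)‖]
  obtain ⟨K, hK⟩ := exists_sq_norm_sub_le_of_inertialEnergy_le hc.le hq hγ
    fun n => hanti (Nat.zero_le n)
  refine ⟨(Metric.isBounded_iff_subset_closedBall z).2
    ⟨√K, Set.range_subset_iff.2 fun n => ?_⟩, ?_⟩
  · rw [mem_closedBall_iff_norm, ← abs_norm]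
    exact Real.abs_le_sqrt (hK n)
  · have hlow : ∀ n, -(q * K) ≤ M (n + 1) := fun n => by
      have hγφ := mul_le_mul (hγ (n + 2)).2 (hK (n + 1)) (sq_nonneg _)
        ((hγ 0).1.trans (hγ 0).2)
      have hD : 0 ≤ c * (1 - γ (n + 1)) * ‖x (n + 2) - x (n + 1)‖ ^ 2 :=
        mul_nonneg (mul_nonneg hc.le (by linarith [(hγ (n + 1)).2])) (sq_nonneg _)
      simp only [M, inertialEnergy]
      nlinarith [sq_nonneg ‖x (n + 2) - z‖]
    have hsum := summable_of_add_le_of_le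
      (b := fun n => c * m * ‖x (n + 2) - x (n + 1)‖ ^ 2) (fun n => by positivity) hdec hlow
    rw [← summable_nat_add_iff 1]
    exact (summable_mul_left_iff hcm.ne').1 hsum

theorem tendsto_of_inertial_of_tendsto_subseq (hc : 0 ≤ c) (hq : q < 1)
    (hγ : ∀ n, 0 ≤ γ n ∧ γ n ≤ q) (hz : ∀ y, ‖T y - z‖ ^ 2 + c * ‖y - T y‖ ^ 2 ≤ ‖y - z‖ ^ 2)
    (hrec : ∀ k, x (k + 2) = T (x (k + 1) + γ (k + 1) • (x (k + 1) - x k)))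
    (hD : Summable fun n => ‖x (n + 1) - x n‖ ^ 2) {σ : ℕ → ℕ} (hσ : StrictMono σ)
    (hlim : Tendsto (x ∘ σ) atTop (𝓝 z)) : Tendsto x atTop (𝓝 z) := by
  have hq₀ : 0 ≤ q := (hγ 0).1.trans (hγ 0).2
  set C := q * (1 + q) + c * q
  obtain ⟨L, hL⟩ := exists_tendsto_of_inertial_le (φ := fun n => ‖x n - z‖ ^ 2)
    (γ := fun n => γ (n + 1)) (δ := fun n => C * ‖x (n + 1) - x n‖ ^ 2) hq
    (fun n => sq_nonneg _) (fun n => hγ (n + 1)) (fun n => by positivity) (hD.mul_left C)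
    fun n => by
      obtain ⟨hγ₀, hγq⟩ := hγ (n + 1)
      have hcoeff : γ (n + 1) * (1 + γ (n + 1)) + c * γ (n + 1) * (1 - γ (n + 1)) ≤ C := by
        nlinarith [mul_nonneg hc hγ₀]
      have hstep := inertial_sq_norm_sub_le hc (fun k => (hγ k).1) hz hrec n
      have hD₁ := mul_le_mul_of_nonneg_right hcoeff (sq_nonneg ‖x (n + 1) - x n‖)
      have hD₂ : 0 ≤ c * (1 - γ (n + 1)) * ‖x (n + 2) - x (n + 1)‖ ^ 2 :=
        mul_nonneg (mul_nonneg hc (by linarith)) (sq_nonneg _)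
      linarith
  have hL0 : L = 0 := tendsto_nhds_unique (hL.comp hσ.tendsto_atTop) <| by
    simpa [Function.comp_def] using (hlim.sub_const z).norm.pow 2
  rw [tendsto_iff_norm_sub_tendsto_zero]
  simpa [hL0] using hL.sqrt

end InnerProduct

theorem stmt_2_general {N : ℕ} {α : ℝ} (hα : α ∈ Set.Ioo (0 : ℝ) 1)
    (T : EuclideanSpace ℝ (Fin N) → EuclideanSpace ℝ (Fin N))
    (hT : IsAveragedOp α T) (hfix : ∃ z, T z = z)
    (γ : ℕ → ℝ) (γbar : ℝ) (hγbar : γbar < 1)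
    (hmono : Monotone γ) (hγ : ∀ k, 0 ≤ γ k ∧ γ k < γbar)
    (m : ℝ) (hm : 0 < m)
    (hcond : ∀ k : ℕ, 2 ≤ k →
      m ≤ 1 - γ (k - 1) - (1 - γ k) * γ k - (α / (1 - α)) * γ k * (1 + γ k))
    (x : ℕ → EuclideanSpace ℝ (Fin N))
    (hrec : ∀ k, x (k + 2) = T (x (k + 1) + γ (k + 1) • (x (k + 1) - x k))) :
    ∃ xbar, T xbar = xbar ∧ Tendsto x atTop (𝓝 xbar) := by
  set c := (1 - α) / α
  have hc : 0 < c := div_pos (sub_pos.2 hα.2) hα.1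
  have hγ' : ∀ k, 0 ≤ γ k ∧ γ k ≤ γbar := fun k => ⟨(hγ k).1, (hγ k).2.le⟩
  have hfixed : ∀ z, T z = z → ∀ y, ‖T y - z‖ ^ 2 + c * ‖y - T y‖ ^ 2 ≤ ‖y - z‖ ^ 2 :=
    fun z hz y => by simpa [hz] using hT y z
  obtain ⟨z, hz⟩ := hfix
  obtain ⟨hbdd, hD⟩ := isBounded_range_and_summable_of_inertial hc hm hγbar hγ' hmono
    (hfixed z hz) hrec fun n => by simpa [c, inv_div] using hcond (n + 2) (by omega)
  have hT₁ : LipschitzWith 1 T := lipschitzWith_one_of_averaged hc.le hT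
  obtain ⟨xbar, hxbar, σ, hσ, hlim⟩ := exists_fixedPoint_tendsto_subseq hT₁.continuous hbdd
    (tendsto_dist_apply_of_inertial hT₁ hγ' hrec hD)
  exact ⟨xbar, hxbar,
    tendsto_of_inertial_of_tendsto_subseq hc.le hγbar hγ' (hfixed xbar hxbar) hrec hD hσ hlim⟩

/-- Inertial iterations converge when `(γ_k)` is non-decreasing in `[0, γ̄)`, `γ̄ < 1`, and
`1 − γ_{k−1} − (1 − γ_k) γ_k − (α/(1−α)) γ_k (1+γ_k) ≥ m > 0` for all `k > 1`. -/
theorem stmt_2 {N : ℕ} (hN : 1 ≤ N) {α : ℝ} (hα : α ∈ Set.Ioo (0 : ℝ) 1)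
    (T : EuclideanSpace ℝ (Fin N) → EuclideanSpace ℝ (Fin N))
    (hT : IsAveragedOp α T) (hfix : ∃ z, T z = z)
    (γ : ℕ → ℝ) (γbar : ℝ) (hγbar : γbar < 1)
    (hmono : Monotone γ) (hγ : ∀ k, 0 ≤ γ k ∧ γ k < γbar)
    (m : ℝ) (hm : 0 < m)
    (hcond : ∀ k : ℕ, 2 ≤ k →
      m ≤ 1 - γ (k - 1) - (1 - γ k) * γ k - (α / (1 - α)) * γ k * (1 + γ k))
    (x₀ : EuclideanSpace ℝ (Fin N)) (x : ℕ → EuclideanSpace ℝ (Fin N))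
    (hx0 : x 0 = x₀)
    -- first step, with the convention `x_{-1} = x₀`:
    (hx1 : x 1 = T (x 0 + γ 0 • (x 0 - x 0)))
    (hrec : ∀ k, x (k + 2) = T (x (k + 1) + γ (k + 1) • (x (k + 1) - x k))) :
    ∃ xbar, T xbar = xbar ∧ Tendsto x atTop (𝓝 xbar) :=
  stmt_2_general hα T hT hfix γ γbar hγbar hmono hγ m hm hcond x hrec
end

section
/- Let N ≥ 1, let α ∈ (0,1), and let T : ℝ^N → ℝ^N be an α-averaged operator with Fix T ≠ ∅. Let γ ∈ [0,1) be a constant satisfying (1 − γ)² > (α/(1−α))·γ·(1 + γ). Then the sequence defined by x_{−1} = x₀ ∈ ℝ^N and x_{k+1} = T(x_k + γ·(x_k − x_{k−1})) converges to a point of Fix T. -/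
/-
For a fixed point z write aₖ = ‖xₖ - z‖² and Dₖ = ‖xₖ₊₁ - xₖ‖². The averagedness inequality at the
extrapolated point xₖ₊₁ + γ(xₖ₊₁ - xₖ), expanded in inner products and combined with
2⟪e, q⟫ ≤ ‖e‖² + ‖q‖², gives
  aₖ₊₂ ≤ aₖ₊₁ + γ(aₖ₊₁ - aₖ) + c Dₖ - β(1 - γ) Dₖ₊₁,   β = (1 - α)/α,  c = γ(1 + γ) + βγ(1 - γ),
and the condition on γ says precisely that c < β(1 - γ). Hence θₖ = aₖ₊₁ - γaₖ + cDₖ decreases by at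
least (β(1 - γ) - c)Dₖ₊₁ per step: this bounds (aₖ) and makes (Dₖ) summable. Then the positive parts
of aₖ₊₁ - aₖ satisfy pₖ₊₁ ≤ γpₖ + cDₖ, so they are summable too and (aₖ) converges, for every fixed
point z (the Alvarez–Attouch argument). Since xₖ₊₁ - xₖ → 0 and T is continuous, every cluster point
of the bounded sequence (xₖ) is fixed; the distance to it converges, and its limit is 0 along a
subsequence.
-/

open Filter Topology

section RealSequences

variable {γ : ℝ}

theorem le_max_div_of_le_mul_add_s3 {a : ℕ → ℝ} {M : ℝ} (hγ0 : 0 ≤ γ) (hγ1 : γ < 1)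
    (h : ∀ k, a (k + 1) ≤ γ * a k + M) (k : ℕ) : a k ≤ max (a 0) (M / (1 - γ)) := by
  have hM : M ≤ (1 - γ) * max (a 0) (M / (1 - γ)) := by
    rw [← div_le_iff₀' (by linarith)]
    exact le_max_right _ _
  induction k with
  | zero => exact le_max_left _ _
  | succ k ih => nlinarith [h k, mul_le_mul_of_nonneg_left ih hγ0]

theorem summable_of_le_mul_add_s3 {p q : ℕ → ℝ} (hγ1 : γ < 1) (hp : ∀ k, 0 ≤ p k)
    (hq0 : ∀ k, 0 ≤ q k) (hq : Summable q) (h : ∀ k, p (k + 1) ≤ γ * p k + q k) :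
    Summable p := by
  refine summable_of_sum_range_le hp (c := (p 0 + ∑' k, q k) / (1 - γ)) fun n => ?_
  have hmono : ∑ i ∈ Finset.range n, p i ≤ ∑ i ∈ Finset.range (n + 1), p i :=
    Finset.sum_le_sum_of_subset_of_nonneg (by simp) fun i _ _ => hp i
  have hstep : ∑ i ∈ Finset.range n, p (i + 1)
      ≤ γ * ∑ i ∈ Finset.range n, p i + ∑ i ∈ Finset.range n, q i := by
    rw [Finset.mul_sum, ← Finset.sum_add_distrib]
    exact Finset.sum_le_sum fun i _ => h i
  have hq_le : ∑ i ∈ Finset.range n, q i ≤ ∑' k, q k := hq.sum_le_tsum _ fun i _ => hq0 i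
  rw [le_div_iff₀ (by linarith)]
  nlinarith [Finset.sum_range_succ' p n]

theorem summable_of_add_le_of_forall_le {θ e : ℕ → ℝ} {m : ℝ} (he : ∀ k, 0 ≤ e k)
    (hθ : ∀ k, m ≤ θ k) (h : ∀ k, θ (k + 1) + e k ≤ θ k) : Summable e := by
  have htel : ∀ n, ∑ k ∈ Finset.range n, e k ≤ θ 0 - θ n := by
    intro n
    induction n with
    | zero => simp
    | succ n ih => rw [Finset.sum_range_succ]; linarith [h n]
  exact summable_of_sum_range_le he (c := θ 0 - m) fun n => by linarith [htel n, hθ n]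

theorem exists_tendsto_of_le_add_summable_s3 {a p : ℕ → ℝ} (ha : BddBelow (Set.range a))
    (hp : Summable p) (h : ∀ k, a (k + 1) ≤ a k + p k) : ∃ L, Tendsto a atTop (𝓝 L) := by
  set b : ℕ → ℝ := fun k => a k - ∑ i ∈ Finset.range k, p i
  have hpsum := hp.hasSum.tendsto_sum_nat
  have hb_anti : Antitone b := antitone_nat_of_succ_le fun k => by
    simp only [b, Finset.sum_range_succ]
    linarith [h k]
  have hb_bdd : BddBelow (Set.range b) := by
    obtain ⟨m, hm⟩ := ha
    obtain ⟨M, hM⟩ := hpsum.bddAbove_range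
    refine ⟨m - M, ?_⟩
    rintro _ ⟨k, rfl⟩
    linarith [hm ⟨k, rfl⟩, hM ⟨k, rfl⟩]
  refine ⟨(⨅ k, b k) + ∑' k, p k, ?_⟩
  convert (tendsto_atTop_ciInf hb_anti hb_bdd).add hpsum using 2 with k
  simp [b]

theorem summable_and_exists_tendsto_of_inertial_le {a D : ℕ → ℝ} {b c : ℝ}
    (hγ0 : 0 ≤ γ) (hγ1 : γ < 1) (ha : ∀ k, 0 ≤ a k) (hD : ∀ k, 0 ≤ D k) (hc : 0 ≤ c)
    (hcb : c < b)
    (h : ∀ k, a (k + 2) ≤ a (k + 1) + γ * (a (k + 1) - a k) + c * D k - b * D (k + 1)) :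
    Summable D ∧ ∃ L, Tendsto a atTop (𝓝 L) := by
  set θ : ℕ → ℝ := fun k => a (k + 1) - γ * a k + c * D k
  have hθ_step : ∀ k, θ (k + 1) + (b - c) * D (k + 1) ≤ θ k := fun k => by
    simp only [θ]
    linarith [h k]
  have hθ_le : ∀ k, θ k ≤ θ 0 := fun k =>
    antitone_nat_of_succ_le (fun k => by nlinarith [hθ_step k, hD (k + 1)]) (Nat.zero_le k)
  set B := max (a 0) (θ 0 / (1 - γ))
  have ha_le : ∀ k, a k ≤ B :=
    le_max_div_of_le_mul_add_s3 hγ0 hγ1 fun k => by nlinarith [hθ_le k, hD k]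
  have hDsucc : Summable fun k => (b - c) * D (k + 1) :=
    summable_of_add_le_of_forall_le (m := -(γ * B)) (fun k => by nlinarith [hD (k + 1)])
      (fun k => by nlinarith [ha_le k, ha (k + 1), hD k]) hθ_step
  have hDsum : Summable D :=
    (summable_nat_add_iff 1).mp ((hDsucc.mul_left (b - c)⁻¹).congr fun k => by
      field_simp [(by linarith : b - c ≠ 0)])
  set p : ℕ → ℝ := fun k => max (a (k + 1) - a k) 0
  have hp : Summable p := by
    refine summable_of_le_mul_add_s3 hγ1 (fun k => le_max_right _ _)
      (fun k => mul_nonneg hc (hD k)) (hDsum.mul_left c) fun k => ?_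
    refine max_le ?_ (by nlinarith [le_max_right (a (k + 1) - a k) 0, hD k])
    nlinarith [h k, hD (k + 1), le_max_left (a (k + 1) - a k) 0]
  exact ⟨hDsum, exists_tendsto_of_le_add_summable_s3 ⟨0, by rintro _ ⟨k, rfl⟩; exact ha k⟩ hp
    fun k => by linarith [le_max_left (a (k + 1) - a k) 0]⟩

end RealSequences

theorem norm_sub_sq_le_of_inertial_step {E : Type*} [NormedAddCommGroup E]
    [InnerProductSpace ℝ E] {β γ : ℝ} (hβ : 0 ≤ β) (hγ : 0 ≤ γ) {z x₀ x₁ x₂ : E}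
    (h : ‖x₂ - z‖ ^ 2 + β * ‖(x₁ + γ • (x₁ - x₀)) - x₂‖ ^ 2 ≤ ‖(x₁ + γ • (x₁ - x₀)) - z‖ ^ 2) :
    ‖x₂ - z‖ ^ 2 ≤ ‖x₁ - z‖ ^ 2 + γ * (‖x₁ - z‖ ^ 2 - ‖x₀ - z‖ ^ 2)
      + (γ * (1 + γ) + β * γ * (1 - γ)) * ‖x₁ - x₀‖ ^ 2 - β * (1 - γ) * ‖x₂ - x₁‖ ^ 2 := by
  set u := x₁ - z
  set e := x₁ - x₀
  set q := x₂ - x₁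
  have hy_z : (x₁ + γ • (x₁ - x₀)) - z = u + γ • e := by simp only [u, e]; module
  have hy_x₂ : (x₁ + γ • (x₁ - x₀)) - x₂ = γ • e - q := by simp only [e, q]; module
  have hx₀_z : x₀ - z = u - e := by simp only [u, e]; module
  rw [hy_z, hy_x₂] at h
  rw [hx₀_z]
  have h_norm_y_z : ‖u + γ • e‖ ^ 2 = ‖u‖ ^ 2 + 2 * (γ * inner ℝ u e) + γ ^ 2 * ‖e‖ ^ 2 := by
    rw [norm_add_sq_real, real_inner_smul_right, norm_smul, Real.norm_eq_abs, mul_pow, sq_abs]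
  have h_norm_y_x₂ : ‖γ • e - q‖ ^ 2 = γ ^ 2 * ‖e‖ ^ 2 - 2 * (γ * inner ℝ e q) + ‖q‖ ^ 2 := by
    rw [norm_sub_sq_real, real_inner_smul_left, norm_smul, Real.norm_eq_abs, mul_pow, sq_abs]
  have h_young : 2 * inner ℝ e q ≤ ‖e‖ ^ 2 + ‖q‖ ^ 2 := by
    nlinarith [norm_sub_sq_real e q, sq_nonneg ‖e - q‖]
  nlinarith [norm_sub_sq_real u e, mul_le_mul_of_nonneg_left h_young (mul_nonneg hβ hγ)]

theorem exists_tendsto_of_tendsto_dist_of_clusterPt_mem {X : Type*} [MetricSpace X]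
    [ProperSpace X] {x : ℕ → X} {S : Set X} (hS : S.Nonempty)
    (hdist : ∀ z ∈ S, ∃ L, Tendsto (fun k => dist (x k) z) atTop (𝓝 L))
    (hclust : ∀ w (φ : ℕ → ℕ), StrictMono φ → Tendsto (x ∘ φ) atTop (𝓝 w) → w ∈ S) :
    ∃ w ∈ S, Tendsto x atTop (𝓝 w) := by
  obtain ⟨z, hz⟩ := hS
  obtain ⟨R, hR⟩ := (hdist z hz).choose_spec.bddAbove_range
  obtain ⟨w, -, φ, hφ, hxφ⟩ := tendsto_subseq_of_bounded (Metric.isBounded_closedBall (x := z))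
    fun k => Metric.mem_closedBall.mpr (hR ⟨k, rfl⟩)
  have hw := hclust w φ hφ hxφ
  obtain ⟨L, hL⟩ := hdist w hw
  have hL0 : L = 0 :=
    tendsto_nhds_unique (hL.comp hφ.tendsto_atTop) (tendsto_iff_dist_tendsto_zero.mp hxφ)
  exact ⟨w, hw, tendsto_iff_dist_tendsto_zero.mpr (hL0 ▸ hL)⟩

theorem tendsto_comp_add_one_of_tendsto_sub {E : Type*} [NormedAddCommGroup E] {x : ℕ → E}
    (hx : Tendsto (fun k => x (k + 1) - x k) atTop (𝓝 0)) {φ : ℕ → ℕ} (hφ : Tendsto φ atTop atTop)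
    {w : E} (hxφ : Tendsto (x ∘ φ) atTop (𝓝 w)) :
    Tendsto (fun n => x (φ n + 1)) atTop (𝓝 w) := by
  simpa using hxφ.add (hx.comp hφ)

section Inertial

variable {E : Type*} [NormedAddCommGroup E] [InnerProductSpace ℝ E] {T : E → E} {β γ : ℝ}
  {x : ℕ → E}

def IsStronglyQuasiNonexpansive (β : ℝ) (T : E → E) : Prop :=
  ∀ z, Function.IsFixedPt T z → ∀ u, ‖T u - z‖ ^ 2 + β * ‖u - T u‖ ^ 2 ≤ ‖u - z‖ ^ 2

theorem summable_and_exists_tendsto_of_inertial (hγ0 : 0 ≤ γ) (hγ1 : γ < 1)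
    (hβγ : γ * (1 + γ) < β * (1 - γ) ^ 2)
    (hT : IsStronglyQuasiNonexpansive β T)
    (hrec : ∀ k, x (k + 2) = T (x (k + 1) + γ • (x (k + 1) - x k)))
    {z : E} (hz : Function.IsFixedPt T z) :
    Summable (fun k => ‖x (k + 1) - x k‖ ^ 2) ∧
      ∃ L, Tendsto (fun k => ‖x k - z‖ ^ 2) atTop (𝓝 L) := by
  have hβ : 0 < β := by nlinarith
  refine summable_and_exists_tendsto_of_inertial_le (b := β * (1 - γ))
    (c := γ * (1 + γ) + β * γ * (1 - γ)) hγ0 hγ1 (fun k => sq_nonneg _) (fun k => sq_nonneg _)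
    (by nlinarith) (by nlinarith) fun k => ?_
  have h := hT z hz (x (k + 1) + γ • (x (k + 1) - x k))
  rw [← hrec k] at h
  exact norm_sub_sq_le_of_inertial_step hβ.le hγ0 h

theorem isFixedPt_of_inertial (hT : Continuous T)
    (hrec : ∀ k, x (k + 2) = T (x (k + 1) + γ • (x (k + 1) - x k)))
    (hx : Tendsto (fun k => x (k + 1) - x k) atTop (𝓝 0)) {φ : ℕ → ℕ} (hφ : StrictMono φ)
    {w : E} (hxφ : Tendsto (x ∘ φ) atTop (𝓝 w)) : Function.IsFixedPt T w := by
  have hx₁ := tendsto_comp_add_one_of_tendsto_sub hx hφ.tendsto_atTop hxφ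
  have hx₂ := tendsto_comp_add_one_of_tendsto_sub hx
    ((tendsto_add_atTop_nat 1).comp hφ.tendsto_atTop) hx₁
  have hy : Tendsto (fun n => x (φ n + 1) + γ • (x (φ n + 1) - x (φ n))) atTop (𝓝 w) := by
    simpa using hx₁.add ((hx.comp hφ.tendsto_atTop).const_smul γ)
  refine tendsto_nhds_unique ((hT.tendsto w).comp hy) ?_
  simpa [Function.comp_def, ← hrec] using hx₂

theorem exists_tendsto_fixedPoint_of_inertial [ProperSpace E] (hγ0 : 0 ≤ γ) (hγ1 : γ < 1)
    (hβγ : γ * (1 + γ) < β * (1 - γ) ^ 2) (hcont : Continuous T)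
    (hT : IsStronglyQuasiNonexpansive β T)
    (hfix : ∃ z, Function.IsFixedPt T z)
    (hrec : ∀ k, x (k + 2) = T (x (k + 1) + γ • (x (k + 1) - x k))) :
    ∃ w, Function.IsFixedPt T w ∧ Tendsto x atTop (𝓝 w) := by
  obtain ⟨z, hz⟩ := hfix
  have hdiff : Tendsto (fun k => x (k + 1) - x k) atTop (𝓝 0) := by
    rw [tendsto_zero_iff_norm_tendsto_zero]
    simpa using (summable_and_exists_tendsto_of_inertial hγ0 hγ1 hβγ hT hrec hz).1
      |>.tendsto_atTop_zero.sqrt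
  refine exists_tendsto_of_tendsto_dist_of_clusterPt_mem ⟨z, hz⟩ (fun w hw => ?_)
    fun w φ hφ hxφ => isFixedPt_of_inertial hcont hrec hdiff hφ hxφ
  obtain ⟨L, hL⟩ := (summable_and_exists_tendsto_of_inertial hγ0 hγ1 hβγ hT hrec hw).2
  exact ⟨√L, by simpa [dist_eq_norm] using hL.sqrt⟩

end Inertial

theorem IsAveragedOp.lipschitzWith_one_s3 {N : ℕ} {α : ℝ} (hα0 : 0 < α) (hα1 : α ≤ 1)
    {T : EuclideanSpace ℝ (Fin N) → EuclideanSpace ℝ (Fin N)} (hT : IsAveragedOp α T) :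
    LipschitzWith 1 T := by
  refine LipschitzWith.of_dist_le_mul fun u v => ?_
  rw [dist_eq_norm, dist_eq_norm, NNReal.coe_one, one_mul]
  have h := hT u v
  have h_nonneg : 0 ≤ (1 - α) / α * ‖u - T u - (v - T v)‖ ^ 2 :=
    mul_nonneg (div_nonneg (by linarith) hα0.le) (sq_nonneg _)
  exact pow_le_pow_iff_left₀ (norm_nonneg _) (norm_nonneg _) two_ne_zero |>.mp (by linarith)

theorem IsAveragedOp.isStronglyQuasiNonexpansive {N : ℕ} {α : ℝ}
    {T : EuclideanSpace ℝ (Fin N) → EuclideanSpace ℝ (Fin N)} (hT : IsAveragedOp α T) :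
    IsStronglyQuasiNonexpansive ((1 - α) / α) T := fun z hz u => by
  simpa [hz.eq] using hT u z

theorem stmt_3_general {N : ℕ} {α : ℝ} (hα : α ∈ Set.Ioo (0 : ℝ) 1)
    (T : EuclideanSpace ℝ (Fin N) → EuclideanSpace ℝ (Fin N))
    (hT : IsAveragedOp α T) (hfix : ∃ z, T z = z)
    (γ : ℝ) (hγ : γ ∈ Set.Ico (0 : ℝ) 1)
    (hcond : (α / (1 - α)) * γ * (1 + γ) < (1 - γ) ^ 2)
    (x : ℕ → EuclideanSpace ℝ (Fin N))
    (hrec : ∀ k, x (k + 2) = T (x (k + 1) + γ • (x (k + 1) - x k))) :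
    ∃ xbar, T xbar = xbar ∧ Tendsto x atTop (𝓝 xbar) := by
  obtain ⟨hα0, hα1⟩ := hα
  have hβγ : γ * (1 + γ) < (1 - α) / α * (1 - γ) ^ 2 := by
    have h1α : 0 < 1 - α := by linarith
    rw [div_mul_eq_mul_div, lt_div_iff₀ hα0]
    rw [div_mul_eq_mul_div, div_mul_eq_mul_div, div_lt_iff₀ h1α] at hcond
    linarith
  exact exists_tendsto_fixedPoint_of_inertial hγ.1 hγ.2 hβγ
    (hT.lipschitzWith_one_s3 hα0 hα1.le).continuous hT.isStronglyQuasiNonexpansive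
    hfix hrec

/-- Inertial iterations with constant parameter `γ ∈ [0,1)` satisfying
`(1 − γ)² > (α/(1−α)) γ (1+γ)` converge to a fixed point. -/
theorem stmt_3 {N : ℕ} (hN : 1 ≤ N) {α : ℝ} (hα : α ∈ Set.Ioo (0 : ℝ) 1)
    (T : EuclideanSpace ℝ (Fin N) → EuclideanSpace ℝ (Fin N))
    (hT : IsAveragedOp α T) (hfix : ∃ z, T z = z)
    (γ : ℝ) (hγ : γ ∈ Set.Ico (0 : ℝ) 1)
    (hcond : (α / (1 - α)) * γ * (1 + γ) < (1 - γ) ^ 2)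
    (x₀ : EuclideanSpace ℝ (Fin N)) (x : ℕ → EuclideanSpace ℝ (Fin N))
    (hx0 : x 0 = x₀)
    -- first step, with the convention `x_{-1} = x₀`:
    (hx1 : x 1 = T (x 0 + γ • (x 0 - x 0)))
    (hrec : ∀ k, x (k + 2) = T (x (k + 1) + γ • (x (k + 1) - x k))) :
    ∃ xbar, T xbar = xbar ∧ Tendsto x atTop (𝓝 xbar) :=
  stmt_3_general hα T hT hfix γ hγ hcond x hrec
end

section
/- Let N ≥ 1, let α ∈ (0,1), and let T : ℝ^N → ℝ^N be an α-averaged operator. Let x̄ ∈ Fix T, let x ∈ ℝ^N, let γ ≥ 0, and set z = T(x) + γ·(T(x) − x). Then ‖T(z) − x̄‖² ≤ ‖x − x̄‖² − (1 + γ)·((1−α)/α − γ)·‖T(x) − x‖² − ((1−α)/α)·‖z − T(z)‖². -/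
open Filter Topology

lemma key_identity {E : Type*} [NormedAddCommGroup E] [InnerProductSpace ℝ E]
    (γ : ℝ) (a b : E) :
    ‖a + γ • (a - b)‖ ^ 2 = (1 + γ) * ‖a‖ ^ 2 - γ * ‖b‖ ^ 2 + γ * (1 + γ) * ‖a - b‖ ^ 2 := by
  simp only [← real_inner_self_eq_norm_sq, inner_add_left, inner_add_right,
    inner_sub_left, inner_sub_right, inner_smul_left, inner_smul_right,
    RCLike.conj_to_real, real_inner_comm a b]
  ring

/-- Key descent inequality for one plain-plus-inertial double step: with
`z = T x + γ (T x − x)` and `x̄` a fixed point,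
`‖T z − x̄‖² ≤ ‖x − x̄‖² − (1+γ)((1−α)/α − γ)‖T x − x‖² − ((1−α)/α)‖z − T z‖²`. -/
theorem stmt_5 {N : ℕ} (hN : 1 ≤ N) {α : ℝ} (hα : α ∈ Set.Ioo (0 : ℝ) 1)
    (T : EuclideanSpace ℝ (Fin N) → EuclideanSpace ℝ (Fin N))
    (hT : IsAveragedOp α T)
    (xbar : EuclideanSpace ℝ (Fin N)) (hxbar : T xbar = xbar)
    (x : EuclideanSpace ℝ (Fin N)) (γ : ℝ) (hγ : 0 ≤ γ)
    (z : EuclideanSpace ℝ (Fin N)) (hz : z = T x + γ • (T x - x)) :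
    ‖T z - xbar‖ ^ 2 ≤ ‖x - xbar‖ ^ 2
      - (1 + γ) * ((1 - α) / α - γ) * ‖T x - x‖ ^ 2
      - ((1 - α) / α) * ‖z - T z‖ ^ 2 := by
  set κ := (1 - α) / α with hκ
  have h1 := hT x xbar
  have h2 := hT z xbar
  rw [hxbar] at h1 h2
  simp only [sub_self, sub_zero] at h1 h2
  have hid : ‖z - xbar‖ ^ 2 = (1 + γ) * ‖T x - xbar‖ ^ 2 - γ * ‖x - xbar‖ ^ 2
      + γ * (1 + γ) * ‖T x - x‖ ^ 2 := by
    have hzx : z - xbar = (T x - xbar) + γ • ((T x - xbar) - (x - xbar)) := by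
      rw [hz]; abel_nf
    rw [hzx, key_identity]
    congr 2
    abel_nf
  have hxz : ‖x - T x‖ = ‖T x - x‖ := by rw [← norm_neg]; congr 1; abel
  have hzz : z - xbar - (z - T z) = T z - xbar := by abel
  rw [hxz] at h1
  -- rewrite h2's second norm
  have h2' : ‖T z - xbar‖ ^ 2 + κ * ‖z - T z‖ ^ 2 ≤ ‖z - xbar‖ ^ 2 := h2
  have hκpos : 0 < κ := div_pos (by linarith [hα.2]) hα.1
  nlinarith [h1, h2', hid, sq_nonneg (‖T x - x‖), hγ, hκpos]
end

section
/- Let N ≥ 1, let α ∈ (0,1), let R be a real N×N matrix and d ∈ ℝ^N, and suppose the affine operator T(x) = Rx + d on ℝ^N is α-averaged. Then every eigenvalue λ ∈ ℂ of R satisfies |λ − (1 − α)| ≤ α; consequently |λ| ≤ 1, with |λ| = 1 if and only if λ = 1. -/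
/-! Only the linear part of an affine map enters the averagedness inequality, which thus reads
`‖R u‖² + c ‖u - R u‖² ≤ ‖u‖²` for real `u`, with `c = (1 - α) / α`. Adding it for the real and
imaginary parts of a complex eigenvector `v` of `R` gives `(|λ|² + c |1 - λ|²) ‖v‖² ≤ ‖v‖²`, i.e.
`|λ|² + c |1 - λ|² ≤ 1`; this is the disc `|λ - (1 - α)| ≤ α`, since
`α (|λ|² + c |1 - λ|² - 1) = |λ - (1 - α)|² - α²`. As `c > 0`, `|λ| = 1` forces `λ = 1`. -/

open Filter Topology

open Matrix WithLp

theorem Matrix.exists_mulVec_eq_smul_of_mem_spectrum {K n : Type*} [Field K] [Fintype n]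
    [DecidableEq n] {A : Matrix n n K} {μ : K} (h : μ ∈ spectrum K A) :
    ∃ v ≠ 0, A *ᵥ v = μ • v := by
  rw [← spectrum_toLin'] at h
  obtain ⟨v, hv⟩ := (Module.End.HasEigenvalue.of_mem_spectrum h).exists_hasEigenvector
  exact ⟨v, hv.2, hv.apply_eq_smul⟩

namespace EuclideanSpace

variable {n : Type*}

def re (v : EuclideanSpace ℂ n) : EuclideanSpace ℝ n := toLp 2 fun i => (v i).re

def im (v : EuclideanSpace ℂ n) : EuclideanSpace ℝ n := toLp 2 fun i => (v i).im

theorem re_sub (v w : EuclideanSpace ℂ n) : re (v - w) = re v - re w := by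
  ext i; simp [re]

theorem im_sub (v w : EuclideanSpace ℂ n) : im (v - w) = im v - im w := by
  ext i; simp [im]

variable [Fintype n]

theorem norm_sq_eq_norm_re_sq_add_norm_im_sq (v : EuclideanSpace ℂ n) :
    ‖v‖ ^ 2 = ‖re v‖ ^ 2 + ‖im v‖ ^ 2 := by
  simp only [norm_sq_eq, ← Finset.sum_add_distrib]
  congr! 1 with i
  rw [Complex.sq_norm, Complex.normSq_apply]
  simp [re, im, sq]

variable [DecidableEq n]

theorem re_toEuclideanLin_map_ofReal (A : Matrix n n ℝ) (v : EuclideanSpace ℂ n) :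
    re (toEuclideanLin (A.map Complex.ofReal) v) = toEuclideanLin A (re v) := by
  ext i; simp [re, mulVec, dotProduct, Complex.re_sum]

theorem im_toEuclideanLin_map_ofReal (A : Matrix n n ℝ) (v : EuclideanSpace ℂ n) :
    im (toEuclideanLin (A.map Complex.ofReal) v) = toEuclideanLin A (im v) := by
  ext i; simp [im, mulVec, dotProduct, Complex.im_sum]

end EuclideanSpace

theorem Matrix.norm_sq_add_mul_norm_sub_sq_le_map_ofReal {n : Type*} [Fintype n] [DecidableEq n]
    {A : Matrix n n ℝ} {c : ℝ}
    (h : ∀ u, ‖toEuclideanLin A u‖ ^ 2 + c * ‖u - toEuclideanLin A u‖ ^ 2 ≤ ‖u‖ ^ 2)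
    (v : EuclideanSpace ℂ n) :
    ‖toEuclideanLin (A.map Complex.ofReal) v‖ ^ 2
      + c * ‖v - toEuclideanLin (A.map Complex.ofReal) v‖ ^ 2 ≤ ‖v‖ ^ 2 := by
  simp only [EuclideanSpace.norm_sq_eq_norm_re_sq_add_norm_im_sq, EuclideanSpace.re_sub,
    EuclideanSpace.im_sub, EuclideanSpace.re_toEuclideanLin_map_ofReal,
    EuclideanSpace.im_toEuclideanLin_map_ofReal]
  linarith [h (EuclideanSpace.re v), h (EuclideanSpace.im v)]

theorem Matrix.norm_sq_add_mul_norm_one_sub_sq_le_one_of_mem_spectrum {n : Type*} [Fintype n]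
    [DecidableEq n] {A : Matrix n n ℝ} {c : ℝ}
    (h : ∀ u, ‖toEuclideanLin A u‖ ^ 2 + c * ‖u - toEuclideanLin A u‖ ^ 2 ≤ ‖u‖ ^ 2)
    {μ : ℂ} (hμ : μ ∈ spectrum ℂ (A.map Complex.ofReal)) :
    ‖μ‖ ^ 2 + c * ‖1 - μ‖ ^ 2 ≤ 1 := by
  obtain ⟨v, hv0, hv⟩ := exists_mulVec_eq_smul_of_mem_spectrum hμ
  have hv_pos : 0 < ‖toLp 2 v‖ ^ 2 := by
    have : toLp 2 v ≠ 0 := by simpa using hv0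
    positivity
  have key := norm_sq_add_mul_norm_sub_sq_le_map_ofReal h (toLp 2 v)
  rw [toLpLin_toLp, toLin'_apply, hv, toLp_smul] at key
  nth_rw 2 [← one_smul ℂ (toLp 2 v)] at key
  rw [← sub_smul, norm_smul, norm_smul, mul_pow, mul_pow, ← mul_assoc, ← add_mul] at key
  exact le_of_mul_le_mul_right (by simpa using key) hv_pos

theorem IsAveragedOp.norm_sq_add_mul_norm_sub_sq_le {N : ℕ} {α : ℝ}
    {L : EuclideanSpace ℝ (Fin N) →ₗ[ℝ] EuclideanSpace ℝ (Fin N)} {d : EuclideanSpace ℝ (Fin N)}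
    (h : IsAveragedOp α (fun x => L x + d)) (u : EuclideanSpace ℝ (Fin N)) :
    ‖L u‖ ^ 2 + (1 - α) / α * ‖u - L u‖ ^ 2 ≤ ‖u‖ ^ 2 := by
  simpa [sub_add_eq_sub_sub] using h u 0

theorem Complex.norm_sub_one_sub_le_iff {α : ℝ} (hα : 0 < α) {z : ℂ} :
    ‖z - (1 - α)‖ ≤ α ↔ ‖z‖ ^ 2 + (1 - α) / α * ‖1 - z‖ ^ 2 ≤ 1 := by
  have key : ‖z - (1 - α)‖ ^ 2 - α ^ 2 = α * (‖z‖ ^ 2 + (1 - α) / α * ‖1 - z‖ ^ 2 - 1) := by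
    simp only [Complex.sq_norm, Complex.normSq_apply, Complex.sub_re, Complex.one_re,
      Complex.ofReal_re, Complex.sub_im, Complex.one_im, Complex.ofReal_im, sub_self, sub_zero,
      zero_sub, mul_neg, neg_mul, neg_neg]
    field_simp
    ring
  rw [← pow_le_pow_iff_left₀ (norm_nonneg _) hα.le two_ne_zero, ← sub_nonpos, key,
    ← mul_zero α, mul_le_mul_iff_of_pos_left hα, sub_nonpos]

theorem Complex.norm_le_one_and_norm_eq_one_iff_of_sq_add_mul_sq_le_one {c : ℝ} (hc : 0 < c)
    {z : ℂ} (h : ‖z‖ ^ 2 + c * ‖1 - z‖ ^ 2 ≤ 1) : ‖z‖ ≤ 1 ∧ (‖z‖ = 1 ↔ z = 1) := by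
  have hnonneg : 0 ≤ c * ‖1 - z‖ ^ 2 := by positivity
  refine ⟨(sq_le_one_iff₀ (norm_nonneg z)).1 (by linarith), fun hz => ?_, fun hz => by simp [hz]⟩
  rw [hz] at h
  have : ‖1 - z‖ ^ 2 ≤ 0 := nonpos_of_mul_nonpos_right (by linarith) hc
  have h1z : ‖1 - z‖ = 0 := by nlinarith [norm_nonneg (1 - z)]
  exact (sub_eq_zero.1 (norm_eq_zero.1 h1z)).symm

theorem stmt_6_general {N : ℕ} {α : ℝ} (hα : α ∈ Set.Ioo (0 : ℝ) 1)
    (R : Matrix (Fin N) (Fin N) ℝ) (d : EuclideanSpace ℝ (Fin N))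
    (hT : IsAveragedOp α (fun x =>
      (EuclideanSpace.equiv (Fin N) ℝ).symm (R.mulVec (EuclideanSpace.equiv (Fin N) ℝ x)) + d))
    (lam : ℂ) (hlam : lam ∈ spectrum ℂ (R.map (algebraMap ℝ ℂ))) :
    ‖lam - ((1 : ℂ) - (α : ℂ))‖ ≤ α ∧
      ‖lam‖ ≤ 1 ∧ (‖lam‖ = 1 ↔ lam = 1) := by
  obtain ⟨hα0, hα1⟩ := hα
  have hR := IsAveragedOp.norm_sq_add_mul_norm_sub_sq_le (L := toEuclideanLin R) hT
  rw [Complex.coe_algebraMap] at hlam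
  have h := Matrix.norm_sq_add_mul_norm_one_sub_sq_le_one_of_mem_spectrum hR hlam
  exact ⟨(Complex.norm_sub_one_sub_le_iff hα0).2 h,
    Complex.norm_le_one_and_norm_eq_one_iff_of_sq_add_mul_sq_le_one
      (div_pos (sub_pos.2 hα1) hα0) h⟩

/-- If the affine operator `x ↦ R x + d` on `ℝ^N` is `α`-averaged, then every (complex)
eigenvalue `λ` of `R` satisfies `|λ − (1−α)| ≤ α`; consequently `|λ| ≤ 1`, with equality
iff `λ = 1`. -/
theorem stmt_6 {N : ℕ} (hN : 1 ≤ N) {α : ℝ} (hα : α ∈ Set.Ioo (0 : ℝ) 1)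
    (R : Matrix (Fin N) (Fin N) ℝ) (d : EuclideanSpace ℝ (Fin N))
    (hT : IsAveragedOp α (fun x =>
      (EuclideanSpace.equiv (Fin N) ℝ).symm (R.mulVec (EuclideanSpace.equiv (Fin N) ℝ x)) + d))
    (lam : ℂ) (hlam : lam ∈ spectrum ℂ (R.map (algebraMap ℝ ℂ))) :
    ‖lam - ((1 : ℂ) - (α : ℂ))‖ ≤ α ∧
      ‖lam‖ ≤ 1 ∧ (‖lam‖ = 1 ↔ lam = 1) :=
  stmt_6_general hα R d hT lam hlam
end

section
/- Let N ≥ 1, let α ∈ (0,1), and let R be a real N×N matrix such that the linear operator x ↦ Rx on ℝ^N is α-averaged. Then the eigenvalue 1 of R is semisimple: its algebraic and geometric multiplicities coincide, i.e., ker((I − R)²) = ker(I − R), where I is the N×N identity matrix. -/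
open Filter Topology

/-- If the linear operator `x ↦ R x` on `ℝ^N` is `α`-averaged, then the eigenvalue `1` of `R`
is semisimple: `ker((I − R)²) = ker(I − R)`. -/
theorem stmt_7 {N : ℕ} (hN : 1 ≤ N) {α : ℝ} (hα : α ∈ Set.Ioo (0 : ℝ) 1)
    (R : Matrix (Fin N) (Fin N) ℝ)
    (hT : IsAveragedOp α (fun x =>
      (EuclideanSpace.equiv (Fin N) ℝ).symm (R.mulVec (EuclideanSpace.equiv (Fin N) ℝ x)))) :
    LinearMap.ker (Matrix.mulVecLin ((1 - R) ^ 2)) = LinearMap.ker (Matrix.mulVecLin (1 - R)) := by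
  obtain ⟨hα0, hα1⟩ := hα
  set e := EuclideanSpace.equiv (Fin N) ℝ with he
  set c : ℝ := (1 - α) / α with hcdef
  have hc : 0 < c := div_pos (by linarith) hα0
  apply le_antisymm
  · intro x hx
    simp only [LinearMap.mem_ker, Matrix.mulVecLin_apply] at hx ⊢
    set y := (1 - R).mulVec x with hy
    have hy0 : (1 - R).mulVec y = 0 := by
      have h2 : ((1 - R) ^ 2).mulVec x = (1 - R).mulVec ((1 - R).mulVec x) := by
        rw [sq, ← Matrix.mulVec_mulVec]
      rw [h2] at hx
      exact hx
    have hRy : R.mulVec y = y := by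
      have h := hy0
      rw [Matrix.sub_mulVec, Matrix.one_mulVec, sub_eq_zero] at h
      exact h.symm
    have hRx : R.mulVec x = x - y := by
      rw [hy, Matrix.sub_mulVec, Matrix.one_mulVec]
      abel
    set X : EuclideanSpace ℝ (Fin N) := e.symm x with hX
    set Y : EuclideanSpace ℝ (Fin N) := e.symm y with hY
    have heX : e X = x := e.apply_symm_apply x
    have heY : e Y = y := e.apply_symm_apply y
    have key : ∀ n : ℕ, ‖X - (n : ℝ) • Y‖ ^ 2 + n * (c * ‖Y‖ ^ 2) ≤ ‖X‖ ^ 2 := by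
      intro n
      induction n with
      | zero => simp
      | succ n ih =>
        have h := hT X ((n : ℝ) • Y)
        have hTX : e.symm (R.mulVec (e X)) = X - Y := by
          rw [heX, hRx, map_sub]
        have hTY : e.symm (R.mulVec (e ((n : ℝ) • Y))) = (n : ℝ) • Y := by
          rw [map_smul, heY, Matrix.mulVec_smul, hRy, map_smul, ← hY]
        simp only [hTX, hTY] at h
        have e1 : (X - Y) - (n : ℝ) • Y = X - ((n : ℕ) + 1 : ℝ) • Y := by
          rw [add_smul, one_smul]; abel
        have e2 : (X - (X - Y)) - ((n : ℝ) • Y - (n : ℝ) • Y) = Y := by abel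
        rw [e1, e2] at h
        have := h
        push_cast at this ⊢
        nlinarith [this, ih]
    have hYzero : Y = 0 := by
      by_contra hne
      have hpos : 0 < c * ‖Y‖ ^ 2 := by
        have : 0 < ‖Y‖ := norm_pos_iff.mpr hne
        positivity
      obtain ⟨n, hn⟩ := exists_nat_gt (‖X‖ ^ 2 / (c * ‖Y‖ ^ 2))
      have h1 := key n
      have h2 : 0 ≤ ‖X - (n : ℝ) • Y‖ ^ 2 := sq_nonneg _
      have h3 : ‖X‖ ^ 2 < n * (c * ‖Y‖ ^ 2) := (div_lt_iff₀ hpos).mp hn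
      linarith
    have : y = 0 := by
      have := congrArg e hYzero
      rw [heY] at this
      simpa using this
    exact this
  · intro x hx
    simp only [LinearMap.mem_ker, Matrix.mulVecLin_apply] at hx ⊢
    rw [sq, ← Matrix.mulVec_mulVec, hx, Matrix.mulVec_zero]
end

section
/- Let N ≥ 1, let α ∈ (0,1), let R be a real N×N matrix and d ∈ ℝ^N, and suppose the affine operator T(x) = Rx + d is α-averaged with Fix T ≠ ∅. Define ν = max{|λ| : λ ∈ ℂ is an eigenvalue of R with λ ≠ 1}, with the convention ν = 0 if 1 is the only eigenvalue of R. Then ν < 1, and for every x₀ ∈ ℝ^N the sequence x_{k+1} = T(x_k) converges to some x̄ ∈ Fix T with linear rate ν, in the sense that limsup_{k→∞} ‖x_k − x̄‖^{1/k} ≤ ν. -/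
open Filter Topology

/-!
Write `T x = R x + d` and `c = (1 - α) / α > 0`. Averagedness of `T` says
`‖R u‖² + c ‖u - R u‖² ≤ ‖u‖²`; this survives complexification, and on an eigenvector of `R`
it reads `|λ|² + c |1 - λ|² ≤ 1`, so every eigenvalue `λ ≠ 1` has `|λ| < 1`, i.e. `ν < 1`.

A nonexpansive `R` has the same fixed points as its adjoint, so the orthogonal projection `P`
onto `Fix R` satisfies `R P = P R = P² = P`. Then `x̄ = z + P (x₀ - z)` is a fixed point for any
`z ∈ Fix T`, and `x_k - x̄ = (R - P)^k (1 - P) (x₀ - z)`. A nonzero eigenvalue of `R - P` is an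
eigenvalue of `R` other than `1`, so the spectral radius of `R - P` is at most `ν`, and Gelfand's
formula gives `‖(R - P)^k‖ ≤ r^k` eventually, for every `r > ν`.
-/

theorem sub_pow_mul_one_sub {A : Type*} [Ring A] {a p : A} (hap : a * p = p) (hpa : p * a = p)
    (hpp : p * p = p) (k : ℕ) : (a - p) ^ k * (1 - p) = a ^ k - p := by
  have hpak : ∀ k : ℕ, p * a ^ k = p := fun k => by
    induction k with
    | zero => rw [pow_zero, mul_one]
    | succ k ih => rw [pow_succ, ← mul_assoc, ih, hpa]
  induction k with
  | zero => rw [pow_zero, pow_zero, one_mul]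
  | succ k ih =>
    rw [pow_succ', mul_assoc, ih, mul_sub, sub_mul, sub_mul, hap, hpak, hpp, ← pow_succ']
    abel

section AffineIteration

variable {R E : Type*} [Ring R] [TopologicalSpace E] [AddCommGroup E] [IsTopologicalAddGroup E]
  [Module R E] {L P : E →L[R] E} {d z : E} {T : E → E}

omit [IsTopologicalAddGroup E] in
theorem map_add_apply_eq_self (hT : ∀ x, T x = L x + d) (hz : T z = z) (hLP : L * P = P)
    (w : E) : T (z + P w) = z + P w := by
  rw [hT, map_add, ← mul_apply_eq_comp, hLP, add_right_comm, ← hT, hz]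

theorem iterate_sub_eq_pow_apply (hT : ∀ x, T x = L x + d) (hz : T z = z) {x : ℕ → E}
    (hx : ∀ k, x (k + 1) = T (x k)) (k : ℕ) : x k - z = (L ^ k) (x 0 - z) := by
  induction k with
  | zero => rfl
  | succ k ih =>
    calc x (k + 1) - z = T (x k) - T z := by rw [hx, hz]
      _ = L (x k - z) := by rw [hT, hT, add_sub_add_right_eq_sub, map_sub]
      _ = (L ^ (k + 1)) (x 0 - z) := by rw [ih, pow_succ', mul_apply_eq_comp]

theorem iterate_sub_eq_sub_pow_apply (hT : ∀ x, T x = L x + d) (hz : T z = z) {x : ℕ → E}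
    (hx : ∀ k, x (k + 1) = T (x k)) (hLP : L * P = P) (hPL : P * L = P) (hPP : P * P = P)
    (k : ℕ) : x k - (z + P (x 0 - z)) = ((L - P) ^ k) ((1 - P) (x 0 - z)) := by
  rw [← mul_apply_eq_comp, sub_pow_mul_one_sub hLP hPL hPP, sub_add_eq_sub_sub,
    iterate_sub_eq_pow_apply hT hz hx, sub_apply]

end AffineIteration

namespace ContinuousLinearMap

theorem mem_ker_one_sub_iff {R M : Type*} [Ring R] [TopologicalSpace M] [AddCommGroup M]
    [IsTopologicalAddGroup M] [Module R M] (L : M →L[R] M) {z : M} :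
    z ∈ (1 - L).ker ↔ L z = z := by
  simp [sub_eq_zero, eq_comm (a := z)]

theorem norm_le_one_of_norm_sq_add_le {𝕜 E : Type*} [NontriviallyNormedField 𝕜]
    [NormedAddCommGroup E] [NormedSpace 𝕜 E] {L : E →L[𝕜] E} {c : ℝ} (hc : 0 ≤ c)
    (h : ∀ u, ‖L u‖ ^ 2 + c * ‖u - L u‖ ^ 2 ≤ ‖u‖ ^ 2) : ‖L‖ ≤ 1 :=
  L.opNorm_le_bound zero_le_one fun u => by
    rw [one_mul]
    nlinarith [h u, norm_nonneg (L u), norm_nonneg u, mul_nonneg hc (sq_nonneg ‖u - L u‖)]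

variable {𝕜 E : Type*} [RCLike 𝕜] [NormedAddCommGroup E] [InnerProductSpace 𝕜 E]
  [CompleteSpace E] {L : E →L[𝕜] E}

theorem adjoint_apply_eq_self_of_apply_eq_self (hL : ‖L‖ ≤ 1) {z : E} (hz : L z = z) :
    adjoint L z = z := by
  have hinner : RCLike.re (inner 𝕜 (adjoint L z) z : 𝕜) = ‖z‖ ^ 2 := by
    rw [adjoint_inner_left, hz, inner_self_eq_norm_sq]
  have hle : ‖adjoint L z‖ ≤ ‖z‖ :=
    (le_opNorm _ z).trans (mul_le_of_le_one_left (norm_nonneg z) (by simpa using hL))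
  have hsq : ‖adjoint L z - z‖ ^ 2 ≤ 0 := by
    rw [norm_sub_sq (𝕜 := 𝕜), hinner]
    nlinarith [norm_nonneg (adjoint L z), norm_nonneg z]
  exact sub_eq_zero.mp (norm_eq_zero.mp (by nlinarith [norm_nonneg (adjoint L z - z)]))

theorem starProjection_ker_one_sub_mul (hL : ‖L‖ ≤ 1) :
    (1 - L).ker.starProjection * L = (1 - L).ker.starProjection := by
  ext x
  have hperp : L x - x ∈ (1 - L).ker ᗮ := by
    intro z hz
    rw [mem_ker_one_sub_iff] at hz
    rw [inner_sub_right, ← adjoint_inner_left (𝕜 := 𝕜),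
      adjoint_apply_eq_self_of_apply_eq_self hL hz, sub_self]
  rw [mul_apply_eq_comp, ← sub_eq_zero, ← map_sub]
  exact (Submodule.starProjection_apply_eq_zero_iff _).mpr hperp

omit [CompleteSpace E] in
theorem mul_starProjection_ker_one_sub [(1 - L).ker.HasOrthogonalProjection] :
    L * (1 - L).ker.starProjection = (1 - L).ker.starProjection := by
  ext x
  exact (mem_ker_one_sub_iff L).mp (Submodule.starProjection_apply_mem _ x)

end ContinuousLinearMap

theorem spectrum.spectralRadius_le_ofReal {𝕜 A : Type*} [NormedField 𝕜] [Ring A]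
    [Algebra 𝕜 A] {a : A} {ν : ℝ} (h : ∀ μ ∈ spectrum 𝕜 a, ‖μ‖ ≤ ν) :
    spectralRadius 𝕜 a ≤ ENNReal.ofReal ν :=
  iSup₂_le fun μ hμ => by
    rw [← ENNReal.ofReal_coe_nnreal, coe_nnnorm]
    exact ENNReal.ofReal_le_ofReal (h μ hμ)

theorem spectrum.eventually_norm_pow_le {A : Type*} [NormedRing A] [NormedAlgebra ℂ A]
    [CompleteSpace A] (a : A) {r : ℝ} (hr : spectralRadius ℂ a < ENNReal.ofReal r) :
    ∀ᶠ k in atTop, ‖a ^ k‖ ≤ r ^ k := by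
  filter_upwards [(pow_norm_pow_one_div_tendsto_nhds_spectralRadius a).eventually_lt_const hr,
    eventually_ne_atTop 0] with k hk hk0
  have hroot : ‖a ^ k‖ ^ (1 / k : ℝ) < r := (ENNReal.ofReal_lt_ofReal_iff'.mp hk).1
  calc ‖a ^ k‖ = (‖a ^ k‖ ^ (1 / k : ℝ)) ^ k := by
        rw [one_div, Real.rpow_inv_natCast_pow (norm_nonneg _) hk0]
    _ ≤ r ^ k := pow_le_pow_left₀ (by positivity) hroot.le k

theorem tendsto_const_rpow_inv_natCast {C : ℝ} (hC : 0 < C) :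
    Tendsto (fun k : ℕ => C ^ (k : ℝ)⁻¹) atTop (𝓝 1) := by
  have := ((Real.continuous_const_rpow hC.ne').tendsto 0).comp tendsto_inv_atTop_nhds_zero_nat
  simpa [Function.comp_def] using this

section GeometricDecay

variable {a : ℕ → ℝ} {C ν : ℝ}

theorem tendsto_zero_of_eventually_le_geometric (ha : ∀ k, 0 ≤ a k) (hν0 : 0 ≤ ν) (hν1 : ν < 1)
    (h : ∀ r, ν < r → ∀ᶠ k in atTop, a k ≤ C * r ^ k) : Tendsto a atTop (𝓝 0) := by
  have hgeom : Tendsto (fun k : ℕ => C * ((1 + ν) / 2) ^ k) atTop (𝓝 0) := by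
    simpa using (tendsto_pow_atTop_nhds_zero_of_lt_one (by linarith) (by linarith)).const_mul C
  exact squeeze_zero' (Eventually.of_forall ha) (h _ (by linarith)) hgeom

theorem limsup_rpow_inv_le_of_eventually_le_geometric (ha : ∀ k, 0 ≤ a k) (hC : 0 < C)
    (hν0 : 0 ≤ ν) (h : ∀ r, ν < r → ∀ᶠ k in atTop, a k ≤ C * r ^ k) :
    limsup (fun k : ℕ => a k ^ (k : ℝ)⁻¹) atTop ≤ ν := by
  refine le_of_forall_pos_le_add fun ε hε => ?_
  set r := ν + ε / 2 with hr_def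
  have hr : 0 ≤ r := by positivity
  have hlim : Tendsto (fun k : ℕ => C ^ (k : ℝ)⁻¹ * r) atTop (𝓝 r) := by
    simpa using (tendsto_const_rpow_inv_natCast hC).mul_const r
  refine limsup_le_of_le (isCoboundedUnder_le_of_le atTop fun k => Real.rpow_nonneg (ha k) _) ?_
  filter_upwards [h r (by linarith), hlim.eventually_le_const (by linarith : r < ν + ε),
    eventually_ne_atTop 0] with k hk hlimk hk0
  calc a k ^ (k : ℝ)⁻¹ ≤ (C * r ^ k) ^ (k : ℝ)⁻¹ :=
        Real.rpow_le_rpow (ha k) hk (by positivity)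
    _ = C ^ (k : ℝ)⁻¹ * r := by
        rw [Real.mul_rpow hC.le (by positivity), Real.pow_rpow_inv_natCast hr hk0]
    _ ≤ ν + ε := hlimk

end GeometricDecay

theorem EuclideanSpace.norm_toLp_ofReal {n : Type*} [Fintype n] (u : EuclideanSpace ℝ n) :
    ‖(WithLp.toLp 2 fun i => (u i : ℂ) : EuclideanSpace ℂ n)‖ = ‖u‖ := by
  simp [EuclideanSpace.norm_eq]

namespace Matrix

variable {m n : Type*} [Fintype n]

theorem mem_spectrum_iff_exists_mulVec_eq_smul [DecidableEq n] {K : Type*} [Field K]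
    (B : Matrix n n K) (μ : K) : μ ∈ spectrum K B ↔ ∃ v ≠ 0, B *ᵥ v = μ • v := by
  rw [spectrum.mem_iff, isUnit_iff_isUnit_det, isUnit_iff_ne_zero, not_ne_iff,
    ← exists_mulVec_eq_zero_iff]
  simp only [Algebra.algebraMap_eq_smul_one, sub_mulVec, smul_mulVec, one_mulVec, sub_eq_zero,
    eq_comm (a := μ • _)]

theorem norm_lt_one_of_mem_spectrum {𝕜 : Type*} [RCLike 𝕜] [DecidableEq n] {B : Matrix n n 𝕜}
    {c : ℝ} (hc : 0 < c)
    (h : ∀ v : n → 𝕜, ∑ i, ‖(B *ᵥ v) i‖ ^ 2 + c * ∑ i, ‖v i - (B *ᵥ v) i‖ ^ 2 ≤ ∑ i, ‖v i‖ ^ 2)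
    {μ : 𝕜} (hμ : μ ∈ spectrum 𝕜 B) (hμ1 : μ ≠ 1) : ‖μ‖ < 1 := by
  obtain ⟨v, hv0, hv⟩ := (mem_spectrum_iff_exists_mulVec_eq_smul B μ).mp hμ
  have hS : 0 < ∑ i, ‖v i‖ ^ 2 := by
    obtain ⟨i, hi⟩ := Function.ne_iff.mp hv0
    exact Finset.sum_pos' (fun j _ => by positivity) ⟨i, Finset.mem_univ i, by positivity⟩
  have h1μ : 0 < ‖1 - μ‖ := norm_pos_iff.mpr (sub_ne_zero.mpr hμ1.symm)
  have hv' := h v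
  simp only [hv, Pi.smul_apply, smul_eq_mul, ← one_sub_mul, norm_mul, mul_pow,
    ← Finset.mul_sum] at hv'
  have : ‖μ‖ ^ 2 < 1 := by nlinarith [mul_pos (mul_pos hc (pow_pos h1μ 2)) hS]
  nlinarith [norm_nonneg μ]

theorem re_map_ofReal_mulVec (B : Matrix m n ℝ) (v : n → ℂ) (i : m) :
    ((B.map (algebraMap ℝ ℂ) *ᵥ v) i).re = (B *ᵥ fun j => (v j).re) i := by
  simp [mulVec, dotProduct, Complex.re_sum]

theorem im_map_ofReal_mulVec (B : Matrix m n ℝ) (v : n → ℂ) (i : m) :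
    ((B.map (algebraMap ℝ ℂ) *ᵥ v) i).im = (B *ᵥ fun j => (v j).im) i := by
  simp [mulVec, dotProduct, Complex.im_sum]

theorem map_ofReal_mulVec_eq_self {R P : Matrix n n ℝ} (hfix : ∀ a, R *ᵥ a = a → P *ᵥ a = a)
    {v : n → ℂ} (hv : R.map (algebraMap ℝ ℂ) *ᵥ v = v) : P.map (algebraMap ℝ ℂ) *ᵥ v = v := by
  have hre := hfix _ (funext fun i => by rw [← re_map_ofReal_mulVec, hv])
  have him := hfix _ (funext fun i => by rw [← im_map_ofReal_mulVec, hv])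
  funext i
  apply Complex.ext
  · rw [re_map_ofReal_mulVec, hre]
  · rw [im_map_ofReal_mulVec, him]

variable [DecidableEq n]

theorem sum_norm_sq_map_ofReal_mulVec_le {R : Matrix n n ℝ} {c : ℝ}
    (h : ∀ u, ‖toEuclideanCLM (𝕜 := ℝ) R u‖ ^ 2 + c * ‖u - toEuclideanCLM (𝕜 := ℝ) R u‖ ^ 2
      ≤ ‖u‖ ^ 2) (v : n → ℂ) :
    ∑ i, ‖(R.map (algebraMap ℝ ℂ) *ᵥ v) i‖ ^ 2
      + c * ∑ i, ‖v i - (R.map (algebraMap ℝ ℂ) *ᵥ v) i‖ ^ 2 ≤ ∑ i, ‖v i‖ ^ 2 := by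
  have hreal (u : n → ℝ) :
      ∑ i, ‖(R *ᵥ u) i‖ ^ 2 + c * ∑ i, ‖u i - (R *ᵥ u) i‖ ^ 2 ≤ ∑ i, ‖u i‖ ^ 2 := by
    simpa [EuclideanSpace.norm_sq_eq] using h (WithLp.toLp 2 u)
  have hsq (z : ℂ) : ‖z‖ ^ 2 = ‖z.re‖ ^ 2 + ‖z.im‖ ^ 2 := by
    rw [Complex.sq_norm, Complex.normSq_apply, Real.norm_eq_abs, Real.norm_eq_abs, sq_abs,
      sq_abs]
    ring
  simp only [hsq, Complex.sub_re, Complex.sub_im, re_map_ofReal_mulVec, im_map_ofReal_mulVec,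
    Finset.sum_add_distrib, mul_add]
  linarith [hreal fun j => (v j).re, hreal fun j => (v j).im]

theorem norm_lt_one_of_mem_spectrum_map_ofReal {R : Matrix n n ℝ} {c : ℝ} (hc : 0 < c)
    (h : ∀ u, ‖toEuclideanCLM (𝕜 := ℝ) R u‖ ^ 2 + c * ‖u - toEuclideanCLM (𝕜 := ℝ) R u‖ ^ 2
      ≤ ‖u‖ ^ 2)
    {μ : ℂ} (hμ : μ ∈ spectrum ℂ (R.map (algebraMap ℝ ℂ))) (hμ1 : μ ≠ 1) : ‖μ‖ < 1 :=
  norm_lt_one_of_mem_spectrum hc (sum_norm_sq_map_ofReal_mulVec_le h) hμ hμ1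

theorem norm_toEuclideanCLM_apply_le_map_ofReal (B : Matrix n n ℝ) (u : EuclideanSpace ℝ n) :
    ‖toEuclideanCLM (𝕜 := ℝ) B u‖
      ≤ ‖toEuclideanCLM (𝕜 := ℂ) (B.map (algebraMap ℝ ℂ))‖ * ‖u‖ := by
  set uC : EuclideanSpace ℂ n := WithLp.toLp 2 fun i => (u i : ℂ)
  have hmap : toEuclideanCLM (𝕜 := ℂ) (B.map (algebraMap ℝ ℂ)) uC
      = WithLp.toLp 2 fun i => ((toEuclideanCLM (𝕜 := ℝ) B u) i : ℂ) := by
    rw [toEuclideanCLM_toLp]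
    congr 1
    funext i
    exact (RingHom.map_mulVec (algebraMap ℝ ℂ) B _ i).symm
  have := (toEuclideanCLM (𝕜 := ℂ) (B.map (algebraMap ℝ ℂ))).le_opNorm uC
  rwa [hmap, EuclideanSpace.norm_toLp_ofReal, EuclideanSpace.norm_toLp_ofReal] at this

theorem eventually_norm_toEuclideanCLM_pow_apply_le (M : Matrix n n ℝ) {ν r : ℝ} (hν : 0 ≤ ν)
    (hM : ∀ μ ∈ spectrum ℂ (M.map (algebraMap ℝ ℂ)), ‖μ‖ ≤ ν) (hr : ν < r) :
    ∀ᶠ k in atTop, ∀ u, ‖(toEuclideanCLM (𝕜 := ℝ) M ^ k) u‖ ≤ r ^ k * ‖u‖ := by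
  set MC := toEuclideanCLM (𝕜 := ℂ) (M.map (algebraMap ℝ ℂ))
  have hspec : spectrum ℂ MC = spectrum ℂ (M.map (algebraMap ℝ ℂ)) :=
    AlgEquiv.spectrum_eq (toEuclideanCLM : Matrix n n ℂ ≃⋆ₐ[ℂ] _).toAlgEquiv _
  have hrad : spectralRadius ℂ MC < ENNReal.ofReal r :=
    (spectrum.spectralRadius_le_ofReal (hspec ▸ hM)).trans_lt
      (ENNReal.ofReal_lt_ofReal_iff'.mpr ⟨hr, hν.trans_lt hr⟩)
  filter_upwards [spectrum.eventually_norm_pow_le MC hrad] with k hk u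
  have hpow : MC ^ k = toEuclideanCLM (𝕜 := ℂ) ((M ^ k).map (algebraMap ℝ ℂ)) := by
    rw [← map_pow]
    exact congrArg _ ((algebraMap ℝ ℂ).mapMatrix.map_pow M k).symm
  calc ‖(toEuclideanCLM (𝕜 := ℝ) M ^ k) u‖ ≤ ‖MC ^ k‖ * ‖u‖ := by
        rw [← map_pow, hpow]
        exact norm_toEuclideanCLM_apply_le_map_ofReal _ u
    _ ≤ r ^ k * ‖u‖ := mul_le_mul_of_nonneg_right hk (norm_nonneg u)

noncomputable def subdominantRadius (A : Matrix n n ℂ) : ℝ :=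
  sSup (insert 0 ((fun z : ℂ => ‖z‖) '' {lam : ℂ | lam ∈ spectrum ℂ A ∧ lam ≠ 1}))

section subdominantRadius

variable {A : Matrix n n ℂ}

theorem finite_norm_spectrum_ne_one (A : Matrix n n ℂ) :
    (insert 0 ((fun z : ℂ => ‖z‖) '' {lam : ℂ | lam ∈ spectrum ℂ A ∧ lam ≠ 1})).Finite :=
  ((A.finite_spectrum.subset fun _ h => h.1).image _).insert 0

theorem subdominantRadius_nonneg (A : Matrix n n ℂ) : 0 ≤ subdominantRadius A :=
  le_csSup (finite_norm_spectrum_ne_one A).bddAbove (Set.mem_insert _ _)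

theorem norm_le_subdominantRadius {μ : ℂ} (hμ : μ ∈ spectrum ℂ A) (hμ1 : μ ≠ 1) :
    ‖μ‖ ≤ subdominantRadius A :=
  le_csSup (finite_norm_spectrum_ne_one A).bddAbove
    (Set.mem_insert_of_mem _ ⟨μ, ⟨hμ, hμ1⟩, rfl⟩)

theorem subdominantRadius_lt_one (h : ∀ μ ∈ spectrum ℂ A, μ ≠ 1 → ‖μ‖ < 1) :
    subdominantRadius A < 1 := by
  rcases (Set.insert_nonempty _ _).csSup_mem (finite_norm_spectrum_ne_one A)
    with h0 | ⟨μ, hμ, hμr⟩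
  · rw [subdominantRadius, h0]
    exact zero_lt_one
  · rw [subdominantRadius, ← hμr]
    exact h μ hμ.1 hμ.2

end subdominantRadius

theorem mem_spectrum_map_ofReal_of_mem_spectrum_sub {R P : Matrix n n ℝ} (hPR : P * R = P)
    (hPP : P * P = P) (hfix : ∀ a, R *ᵥ a = a → P *ᵥ a = a) {μ : ℂ}
    (hμ : μ ∈ spectrum ℂ ((R - P).map (algebraMap ℝ ℂ))) (hμ0 : μ ≠ 0) :
    μ ∈ spectrum ℂ (R.map (algebraMap ℝ ℂ)) ∧ μ ≠ 1 := by
  obtain ⟨v, hv0, hv⟩ := (mem_spectrum_iff_exists_mulVec_eq_smul _ μ).mp hμ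
  have hPv : P.map (algebraMap ℝ ℂ) *ᵥ v = 0 := by
    have h : P.map (algebraMap ℝ ℂ) *ᵥ ((R - P).map (algebraMap ℝ ℂ) *ᵥ v) = 0 := by
      rw [mulVec_mulVec, ← Matrix.map_mul, mul_sub, hPR, hPP, sub_self,
        Matrix.map_zero _ (map_zero _), zero_mulVec]
    rw [hv, mulVec_smul] at h
    exact (smul_eq_zero.mp h).resolve_left hμ0
  have hRv : R.map (algebraMap ℝ ℂ) *ᵥ v = μ • v := by
    rwa [Matrix.map_sub _ (map_sub _), sub_mulVec, hPv, sub_zero] at hv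
  refine ⟨(mem_spectrum_iff_exists_mulVec_eq_smul _ μ).mpr ⟨v, hv0, hRv⟩, ?_⟩
  rintro rfl
  rw [one_smul] at hRv
  exact hv0 (by rw [← map_ofReal_mulVec_eq_self hfix hRv, hPv])

section fixedPointProj

variable {𝕜 : Type*} [RCLike 𝕜]

noncomputable def fixedPointProj (R : Matrix n n 𝕜) : Matrix n n 𝕜 :=
  (toEuclideanCLM (n := n) (𝕜 := 𝕜)).symm
    (1 - toEuclideanCLM (n := n) (𝕜 := 𝕜) R).ker.starProjection

variable (R : Matrix n n 𝕜)

theorem toEuclideanCLM_fixedPointProj :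
    toEuclideanCLM (n := n) (𝕜 := 𝕜) (fixedPointProj R) =
      (1 - toEuclideanCLM (n := n) (𝕜 := 𝕜) R).ker.starProjection :=
  StarAlgEquiv.apply_symm_apply _ _

theorem fixedPointProj_mul (hR : ‖toEuclideanCLM (n := n) (𝕜 := 𝕜) R‖ ≤ 1) :
    fixedPointProj R * R = fixedPointProj R :=
  EquivLike.injective (toEuclideanCLM (n := n) (𝕜 := 𝕜)) <| by
    rw [map_mul, toEuclideanCLM_fixedPointProj,
      ContinuousLinearMap.starProjection_ker_one_sub_mul hR]

theorem fixedPointProj_mul_self : fixedPointProj R * fixedPointProj R = fixedPointProj R :=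
  EquivLike.injective (toEuclideanCLM (n := n) (𝕜 := 𝕜)) <| by
    rw [map_mul, toEuclideanCLM_fixedPointProj]
    exact Submodule.isIdempotentElem_starProjection _

theorem fixedPointProj_mulVec_eq_self {a : n → 𝕜} (ha : R *ᵥ a = a) :
    fixedPointProj R *ᵥ a = a := by
  have hmem : WithLp.toLp 2 a ∈ (1 - toEuclideanCLM (n := n) (𝕜 := 𝕜) R).ker := by
    rw [ContinuousLinearMap.mem_ker_one_sub_iff, toEuclideanCLM_toLp, ha]
  have := Submodule.starProjection_eq_self_iff.mpr hmem
  rw [← toEuclideanCLM_fixedPointProj, toEuclideanCLM_toLp] at this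
  exact WithLp.toLp_injective 2 this

end fixedPointProj

theorem eventually_norm_sub_starProjection_pow_apply_le (R : Matrix n n ℝ)
    (hR : ‖toEuclideanCLM (𝕜 := ℝ) R‖ ≤ 1) {r : ℝ}
    (hr : subdominantRadius (R.map (algebraMap ℝ ℂ)) < r) :
    ∀ᶠ k in atTop, ∀ u, ‖((toEuclideanCLM (𝕜 := ℝ) R
      - (1 - toEuclideanCLM (𝕜 := ℝ) R).ker.starProjection) ^ k) u‖ ≤ r ^ k * ‖u‖ := by
  rw [← toEuclideanCLM_fixedPointProj, ← map_sub]
  refine (R - fixedPointProj R).eventually_norm_toEuclideanCLM_pow_apply_le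
    (subdominantRadius_nonneg _) (fun μ hμ => ?_) hr
  rcases eq_or_ne μ 0 with rfl | hμ0
  · simpa using subdominantRadius_nonneg _
  · obtain ⟨hμR, hμ1⟩ := mem_spectrum_map_ofReal_of_mem_spectrum_sub (fixedPointProj_mul R hR)
      (fixedPointProj_mul_self R) (fun _ => fixedPointProj_mulVec_eq_self R) hμ hμ0
    exact norm_le_subdominantRadius hμR hμ1

end Matrix

theorem IsAveragedOp.norm_sq_add_le_of_affine {N : ℕ} {α : ℝ}
    {T : EuclideanSpace ℝ (Fin N) → EuclideanSpace ℝ (Fin N)}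
    {L : EuclideanSpace ℝ (Fin N) →L[ℝ] EuclideanSpace ℝ (Fin N)} {d : EuclideanSpace ℝ (Fin N)}
    (hT : IsAveragedOp α T) (hTL : ∀ x, T x = L x + d) (u : EuclideanSpace ℝ (Fin N)) :
    ‖L u‖ ^ 2 + (1 - α) / α * ‖u - L u‖ ^ 2 ≤ ‖u‖ ^ 2 := by
  simpa [hTL, sub_add_eq_sub_sub] using hT u 0

theorem stmt_8_general {N : ℕ} {α : ℝ} (hα : α ∈ Set.Ioo (0 : ℝ) 1)
    (R : Matrix (Fin N) (Fin N) ℝ) (d : EuclideanSpace ℝ (Fin N))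
    (T : EuclideanSpace ℝ (Fin N) → EuclideanSpace ℝ (Fin N))
    (hTdef : T = fun x =>
      (EuclideanSpace.equiv (Fin N) ℝ).symm (R.mulVec (EuclideanSpace.equiv (Fin N) ℝ x)) + d)
    (hT : IsAveragedOp α T) (hfix : ∃ z, T z = z)
    (ν : ℝ)
    (hν : ν = sSup (insert (0 : ℝ)
      ((fun z : ℂ => ‖z‖) '' {lam : ℂ | lam ∈ spectrum ℂ (R.map (algebraMap ℝ ℂ)) ∧ lam ≠ 1}))) :
    ν < 1 ∧
    ∀ (x₀ : EuclideanSpace ℝ (Fin N)) (x : ℕ → EuclideanSpace ℝ (Fin N)),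
      x 0 = x₀ → (∀ k, x (k + 1) = T (x k)) →
      ∃ xbar, T xbar = xbar ∧ Tendsto x atTop (𝓝 xbar) ∧
        Filter.limsup (fun k : ℕ => ‖x k - xbar‖ ^ ((k : ℝ)⁻¹)) atTop ≤ ν := by
  set L := Matrix.toEuclideanCLM (𝕜 := ℝ) R
  have hTL : ∀ x, T x = L x + d := fun x => by rw [hTdef]; rfl
  have hc : 0 < (1 - α) / α := div_pos (sub_pos.mpr hα.2) hα.1
  have hL := hT.norm_sq_add_le_of_affine hTL
  have hL1 : ‖L‖ ≤ 1 := L.norm_le_one_of_norm_sq_add_le hc.le hL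
  replace hν : ν = Matrix.subdominantRadius (R.map (algebraMap ℝ ℂ)) := hν
  have hν0 : 0 ≤ ν := hν ▸ Matrix.subdominantRadius_nonneg _
  have hν1 : ν < 1 := hν ▸ Matrix.subdominantRadius_lt_one fun _ =>
    Matrix.norm_lt_one_of_mem_spectrum_map_ofReal hc hL
  refine ⟨hν1, fun x₀ x hx0 hx => ?_⟩
  obtain ⟨z, hz⟩ := hfix
  set P := (1 - L).ker.starProjection
  have hLP : L * P = P := L.mul_starProjection_ker_one_sub
  have hdecay : ∀ r, ν < r → ∀ᶠ k in atTop,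
      ‖x k - (z + P (x₀ - z))‖ ≤ (‖(1 - P) (x₀ - z)‖ + 1) * r ^ k := by
    intro r hr
    filter_upwards [R.eventually_norm_sub_starProjection_pow_apply_le hL1 (hν ▸ hr)] with k hk
    rw [← hx0, iterate_sub_eq_sub_pow_apply hTL hz hx hLP (L.starProjection_ker_one_sub_mul hL1)
      (Submodule.isIdempotentElem_starProjection _), hx0]
    nlinarith [hk ((1 - P) (x₀ - z)), pow_nonneg (hν0.trans hr.le) k]
  refine ⟨z + P (x₀ - z), map_add_apply_eq_self hTL hz hLP _, ?_, ?_⟩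
  · exact tendsto_iff_norm_sub_tendsto_zero.mpr
      (tendsto_zero_of_eventually_le_geometric (fun _ => norm_nonneg _) hν0 hν1 hdecay)
  · exact limsup_rpow_inv_le_of_eventually_le_geometric (fun _ => norm_nonneg _) (by positivity)
      hν0 hdecay

/-- Linear convergence of an `α`-averaged affine operator `T x = R x + d` with a fixed point:
`ν = max{|λ| : λ eigenvalue of R, λ ≠ 1}` (`ν = 0` if `1` is the only eigenvalue) satisfies
`ν < 1`, and the fixed-point iterates converge to some `x̄ ∈ Fix T` with
`limsup ‖x_k − x̄‖^{1/k} ≤ ν`. -/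
theorem stmt_8 {N : ℕ} (hN : 1 ≤ N) {α : ℝ} (hα : α ∈ Set.Ioo (0 : ℝ) 1)
    (R : Matrix (Fin N) (Fin N) ℝ) (d : EuclideanSpace ℝ (Fin N))
    (T : EuclideanSpace ℝ (Fin N) → EuclideanSpace ℝ (Fin N))
    (hTdef : T = fun x =>
      (EuclideanSpace.equiv (Fin N) ℝ).symm (R.mulVec (EuclideanSpace.equiv (Fin N) ℝ x)) + d)
    (hT : IsAveragedOp α T) (hfix : ∃ z, T z = z)
    (ν : ℝ)
    (hν : ν = sSup (insert (0 : ℝ)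
      ((fun z : ℂ => ‖z‖) '' {lam : ℂ | lam ∈ spectrum ℂ (R.map (algebraMap ℝ ℂ)) ∧ lam ≠ 1}))) :
    ν < 1 ∧
    ∀ (x₀ : EuclideanSpace ℝ (Fin N)) (x : ℕ → EuclideanSpace ℝ (Fin N)),
      x 0 = x₀ → (∀ k, x (k + 1) = T (x k)) →
      ∃ xbar, T xbar = xbar ∧ Tendsto x atTop (𝓝 xbar) ∧
        Filter.limsup (fun k : ℕ => ‖x k - xbar‖ ^ ((k : ℝ)⁻¹)) atTop ≤ ν :=
  stmt_8_general hα R d T hTdef hT hfix ν hν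
end

section
/- Let λ < 0 be a real number and γ ≥ 0. Then the quadratic μ² − (1+γ)·λ·μ + γ·λ has two real roots, and the maximum of their absolute values equals ((1+γ)·|λ| + √((1+γ)²·λ² + 4·γ·|λ|))/2, which is greater than or equal to (1+γ)·|λ|. In particular, inertia with parameter γ ≥ 0 increases the modulus of every negative eigenvalue of the linear part at least by the factor (1+γ). -/
open Filter Topology

/-- For a negative eigenvalue `λ < 0` and inertia `γ ≥ 0`, the quadratic
`μ² − (1+γ)λμ + γλ` has two real roots, the maximum of whose absolute values equals
`((1+γ)|λ| + √((1+γ)²λ² + 4γ|λ|))/2 ≥ (1+γ)|λ|`. -/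
theorem stmt_11 {lam γ : ℝ} (hlam : lam < 0) (hγ : 0 ≤ γ) :
    ∃ μ₁ μ₂ : ℝ,
      (∀ μ : ℝ, μ ^ 2 - (1 + γ) * lam * μ + γ * lam = (μ - μ₁) * (μ - μ₂)) ∧
      max |μ₁| |μ₂|
        = ((1 + γ) * |lam| + Real.sqrt ((1 + γ) ^ 2 * lam ^ 2 + 4 * γ * |lam|)) / 2 ∧
      (1 + γ) * |lam| ≤ max |μ₁| |μ₂| := by
  set a : ℝ := (1 + γ) * lam with ha
  have habs : |lam| = -lam := abs_of_neg hlam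
  have hD : (1 + γ) ^ 2 * lam ^ 2 + 4 * γ * |lam| = a ^ 2 - 4 * (γ * lam) := by
    rw [habs]; ring
  set s : ℝ := Real.sqrt ((1 + γ) ^ 2 * lam ^ 2 + 4 * γ * |lam|) with hs
  have hDnn : 0 ≤ (1 + γ) ^ 2 * lam ^ 2 + 4 * γ * |lam| := by
    have : 0 ≤ 4 * γ * |lam| := by positivity
    positivity
  have hs2 : s ^ 2 = a ^ 2 - 4 * (γ * lam) := by
    rw [hs, Real.sq_sqrt hDnn, hD]
  have ha0 : a ≤ 0 := by
    have : 0 < 1 + γ := by linarith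
    nlinarith
  have hsa : -a ≤ s := by
    have h1 : (-a) ^ 2 ≤ s ^ 2 := by
      rw [hs2]; nlinarith [mul_nonneg hγ (le_of_lt (neg_pos.mpr hlam))]
    have hsnn : 0 ≤ s := Real.sqrt_nonneg _
    nlinarith
  refine ⟨(a - s) / 2, (a + s) / 2, ?_, ?_, ?_⟩
  · intro μ
    have : (μ - (a - s) / 2) * (μ - (a + s) / 2)
        = μ ^ 2 - a * μ + (a ^ 2 - s ^ 2) / 4 := by ring
    rw [this, hs2]; ring
  · have h1 : |(a - s) / 2| = (s - a) / 2 := by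
      rw [abs_of_nonpos (by linarith [Real.sqrt_nonneg ((1 + γ) ^ 2 * lam ^ 2 + 4 * γ * |lam|)] : (a - s)/2 ≤ 0)]
      ring
    have h2 : |(a + s) / 2| = (a + s) / 2 := by
      rw [abs_of_nonneg (by linarith : (0:ℝ) ≤ (a + s) / 2)]
    rw [h1, h2, max_eq_left (by linarith), habs, ha]
    ring
  · have h1 : (s - a) / 2 ≤ max |(a - s) / 2| |(a + s) / 2| := by
      have : |(a - s) / 2| = (s - a) / 2 := by
        rw [abs_of_nonpos (by linarith [Real.sqrt_nonneg ((1 + γ) ^ 2 * lam ^ 2 + 4 * γ * |lam|)] : (a - s)/2 ≤ 0)]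
        ring
      rw [← this]; exact le_max_left _ _
    have h2 : (1 + γ) * |lam| = -a := by rw [habs, ha]; ring
    rw [h2]; linarith
end

section
/- Let λ ∈ (0,1) and set γ* = (1 − √(1−λ))²/λ. Then: (a) for every t ∈ [0, λ], every complex root μ of μ² − (1+γ*)·t·μ + γ*·t satisfies |μ| ≤ 1 − √(1−λ), and for t = λ the quadratic has the double root 1 − √(1−λ); and (b) for every γ ≥ 0, the quadratic μ² − (1+γ)·λ·μ + γ·λ has a complex root μ with |μ| ≥ 1 − √(1−λ). In other words, γ* minimizes over γ ≥ 0 the worst-case root modulus, with optimal value ν* = 1 − √(1−λ). -/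
/-!
Write `ν = 1 - √(1 - λ)`, so that `ν² + λ = 2ν`; then `γ* λ = ν²` and `(1 + γ*) λ = 2ν`, and at
`t = λ` the quadratic is `(μ - ν)²`. For `t ∈ [0, λ]` its discriminant `(1 + γ*)² t (t - λ)` is
nonpositive, so the roots are conjugate and `|μ|² = γ* t ≤ ν²`. For an arbitrary `γ`, either
`γ λ ≥ ν²`, and the root of larger modulus has `|μ|² ≥ |μ₁ μ₂| = γ λ ≥ ν²`, or `γ λ ≤ ν²`, and the
quadratic takes the value `(1 - ν)(γ λ - ν²) ≤ 0` at `ν`, so it has a real root `≥ ν`.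
-/

theorem Complex.norm_sq_eq_of_quadratic_root {b c : ℝ} (hdisc : b ^ 2 ≤ 4 * c) {μ : ℂ}
    (hμ : μ ^ 2 - (b : ℂ) * μ + (c : ℂ) = 0) : ‖μ‖ ^ 2 = c := by
  have hre := congrArg Complex.re hμ
  have him := congrArg Complex.im hμ
  simp only [sq, sub_re, add_re, mul_re, ofReal_re, ofReal_im, zero_re, sub_im, add_im, mul_im,
    zero_im] at hre him
  rw [Complex.sq_norm, normSq_apply]
  rcases mul_eq_zero.mp (show μ.im * (2 * μ.re - b) = 0 by linear_combination him) with him0 | hb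
  · -- a real root of a quadratic with nonpositive discriminant is the double root `b / 2`
    have hdouble : (2 * μ.re - b) ^ 2 = b ^ 2 - 4 * c := by
      linear_combination 4 * hre + 4 * μ.im * him0
    have hcentre : 2 * μ.re - b = 0 := pow_eq_zero_iff two_ne_zero |>.mp <|
      le_antisymm (by linarith) (sq_nonneg _)
    rw [him0]
    nlinarith
  · linear_combination -hre + μ.re * hb

theorem exists_quadratic_root_ge_of_eval_nonpos {b c ν : ℝ} (h : ν ^ 2 - b * ν + c ≤ 0) :
    ∃ x : ℝ, x ^ 2 - b * x + c = 0 ∧ ν ≤ x := by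
  have hdisc : (2 * ν - b) ^ 2 ≤ b ^ 2 - 4 * c := by linarith
  set e := √(b ^ 2 - 4 * c)
  have he : e ^ 2 = b ^ 2 - 4 * c := Real.sq_sqrt ((sq_nonneg _).trans hdisc)
  refine ⟨(b + e) / 2, by linear_combination he / 4, ?_⟩
  have : 2 * ν - b ≤ e := (le_abs_self _).trans (Real.abs_le_sqrt hdisc)
  linarith

theorem exists_quadratic_root_norm_const_le_norm_sq (b c : ℂ) :
    ∃ μ : ℂ, μ ^ 2 - b * μ + c = 0 ∧ ‖c‖ ≤ ‖μ‖ ^ 2 := by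
  obtain ⟨s, hs⟩ := IsAlgClosed.exists_eq_mul_self (b ^ 2 - 4 * c)
  have hroot : ∀ r ∈ ({(b + s) / 2, (b - s) / 2} : Set ℂ), r ^ 2 - b * r + c = 0 := by
    rintro r (rfl | rfl) <;> linear_combination -hs / 4
  have hprod : c = (b + s) / 2 * ((b - s) / 2) := by linear_combination -hs / 4
  rcases le_total ‖(b - s) / 2‖ ‖(b + s) / 2‖ with hle | hle
  · refine ⟨_, hroot _ (.inl rfl), ?_⟩
    rw [hprod, norm_mul, sq]
    exact mul_le_mul_of_nonneg_left hle (norm_nonneg _)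
  · refine ⟨_, hroot _ (.inr rfl), ?_⟩
    rw [hprod, norm_mul, sq]
    exact mul_le_mul_of_nonneg_right hle (norm_nonneg _)

theorem exists_quadratic_root_norm_ge {b c ν : ℝ} (hν : 0 ≤ ν)
    (h : ν ^ 2 - b * ν + c ≤ 0 ∨ ν ^ 2 ≤ c) :
    ∃ μ : ℂ, μ ^ 2 - (b : ℂ) * μ + (c : ℂ) = 0 ∧ ν ≤ ‖μ‖ := by
  rcases h with heval | hc
  · obtain ⟨x, hx, hνx⟩ := exists_quadratic_root_ge_of_eval_nonpos heval
    refine ⟨x, by exact_mod_cast hx, ?_⟩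
    rw [Complex.norm_real, Real.norm_eq_abs]
    exact hνx.trans (le_abs_self x)
  · obtain ⟨μ, hμ, hnorm⟩ := exists_quadratic_root_norm_const_le_norm_sq b c
    refine ⟨μ, hμ, (pow_le_pow_iff_left₀ hν (norm_nonneg μ) two_ne_zero).mp ?_⟩
    rw [Complex.norm_real, Real.norm_eq_abs] at hnorm
    exact hc.trans ((le_abs_self c).trans hnorm)

theorem one_sub_sqrt_one_sub_sq_add {lam : ℝ} (h : lam ≤ 1) :
    (1 - √(1 - lam)) ^ 2 + lam = 2 * (1 - √(1 - lam)) := by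
  linear_combination Real.sq_sqrt (sub_nonneg.mpr h)

theorem norm_inertial_root_le {lam γ ν t : ℝ} (hlam : 0 < lam) (hν : 0 ≤ ν)
    (hc : γ * lam = ν ^ 2) (hb : (1 + γ) * lam = 2 * ν) (ht : t ∈ Set.Icc 0 lam) {μ : ℂ}
    (hμ : μ ^ 2 - (1 + (γ : ℂ)) * (t : ℂ) * μ + (γ : ℂ) * (t : ℂ) = 0) : ‖μ‖ ≤ ν := by
  obtain ⟨ht0, htlam⟩ := ht
  have hγ : 0 ≤ γ := nonneg_of_mul_nonneg_left (hc ▸ sq_nonneg ν) hlam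
  have hdouble : (1 + γ) ^ 2 * lam = 4 * γ := mul_right_cancel₀ hlam.ne' <| by
    linear_combination ((1 + γ) * lam + 2 * ν) * hb - 4 * hc
  have hdisc : ((1 + γ) * t) ^ 2 ≤ 4 * (γ * t) := by
    nlinarith [mul_nonneg (mul_nonneg (sq_nonneg (1 + γ)) ht0) (sub_nonneg.mpr htlam)]
  have hnorm := Complex.norm_sq_eq_of_quadratic_root hdisc (μ := μ) <| by
    push_cast; linear_combination hμ
  refine (pow_le_pow_iff_left₀ (norm_nonneg μ) hν two_ne_zero).mp ?_
  rw [hnorm, ← hc]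
  exact mul_le_mul_of_nonneg_left htlam hγ

theorem exists_inertial_root_norm_ge {lam ν : ℝ} (hν0 : 0 ≤ ν) (hν1 : ν ≤ 1)
    (hνlam : ν ^ 2 + lam = 2 * ν) (γ : ℝ) :
    ∃ μ : ℂ, μ ^ 2 - (1 + (γ : ℂ)) * (lam : ℂ) * μ + (γ : ℂ) * (lam : ℂ) = 0 ∧ ν ≤ ‖μ‖ := by
  obtain ⟨μ, hμ, hνμ⟩ := exists_quadratic_root_norm_ge (b := (1 + γ) * lam) (c := γ * lam) hν0 <| by
    rcases le_total (γ * lam) (ν ^ 2) with hle | hge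
    · left
      have heval : ν ^ 2 - (1 + γ) * lam * ν + γ * lam = (1 - ν) * (γ * lam - ν ^ 2) := by
        linear_combination (-ν) * hνlam
      rw [heval]
      exact mul_nonpos_of_nonneg_of_nonpos (sub_nonneg.mpr hν1) (sub_nonpos.mpr hle)
    · exact Or.inr hge
  exact ⟨μ, by push_cast at hμ; exact hμ, hνμ⟩

/-- Optimal inertia for eigenvalues in `[0, λ]`, `λ ∈ (0,1)`: with
`γ* = (1 − √(1−λ))²/λ`, (a) every complex root of `μ² − (1+γ*)tμ + γ*t` with `t ∈ [0, λ]`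
has modulus `≤ 1 − √(1−λ)`, and at `t = λ` the quadratic has `1 − √(1−λ)` as a double root;
(b) for every `γ ≥ 0`, the quadratic `μ² − (1+γ)λμ + γλ` has a root of modulus
`≥ 1 − √(1−λ)`. -/
theorem stmt_12 {lam : ℝ} (hlam : lam ∈ Set.Ioo (0 : ℝ) 1)
    (γs : ℝ) (hγs : γs = (1 - Real.sqrt (1 - lam)) ^ 2 / lam) :
    (∀ t ∈ Set.Icc (0 : ℝ) lam,
        ∀ μ : ℂ, μ ^ 2 - (1 + (γs : ℂ)) * (t : ℂ) * μ + (γs : ℂ) * (t : ℂ) = 0 →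
          ‖μ‖ ≤ 1 - Real.sqrt (1 - lam)) ∧
    (∀ μ : ℂ, μ ^ 2 - (1 + (γs : ℂ)) * (lam : ℂ) * μ + (γs : ℂ) * (lam : ℂ)
        = (μ - ((1 - Real.sqrt (1 - lam) : ℝ) : ℂ)) ^ 2) ∧
    (∀ γ : ℝ, 0 ≤ γ →
        ∃ μ : ℂ, μ ^ 2 - (1 + (γ : ℂ)) * (lam : ℂ) * μ + (γ : ℂ) * (lam : ℂ) = 0 ∧
          1 - Real.sqrt (1 - lam) ≤ ‖μ‖) := by
  obtain ⟨hlam0, hlam1⟩ := hlam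
  have hνlam := one_sub_sqrt_one_sub_sq_add hlam1.le
  set ν := 1 - √(1 - lam)
  have hν0 : 0 < ν := sub_pos.mpr ((Real.sqrt_lt' one_pos).mpr (by linarith))
  have hν1 : ν ≤ 1 := sub_le_self _ (Real.sqrt_nonneg _)
  have hc : γs * lam = ν ^ 2 := by rw [hγs]; field_simp
  have hb : (1 + γs) * lam = 2 * ν := by linear_combination hc + hνlam
  refine ⟨fun t ht μ hμ ↦ norm_inertial_root_le hlam0 hν0.le hc hb ht hμ, fun μ ↦ ?_,
    fun γ _ ↦ exists_inertial_root_norm_ge hν0.le hν1 hνlam γ⟩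
  have hbC : (1 + (γs : ℂ)) * lam = 2 * ν := by exact_mod_cast congrArg Complex.ofReal hb
  have hcC : (γs : ℂ) * lam = (ν : ℂ) ^ 2 := by exact_mod_cast congrArg Complex.ofReal hc
  linear_combination -μ * hbC + hcC
end

section
/- Let N ≥ 1, let α ∈ (0,1), and let T : ℝ^N → ℝ^N be an α-averaged operator. Let η₁, η₂ ∈ (0, 1/α], let x ∈ ℝ^N, and set y = η₁·T(x) + (1−η₁)·x and z = η₂·T(y) + (1−η₂)·y. Then ‖z − y‖ ≤ (η₂/η₁)·‖y − x‖. -/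
/-!
Write `r = T x - x` and `s = T y - y`, so that `y - x = η₁ r` and `z - y = η₂ s`; it suffices to
show `‖s‖ ≤ ‖r‖`. Averagedness is equivalent to `‖d‖² ≤ 2α⟪x - y, d⟫` for
`d = (I - T) x - (I - T) y`. Here `d = s - r` and `x - y = -η₁ r`, so
`2⟪r, d⟫ ≤ -‖d‖² / (αη₁) ≤ -‖d‖²` because `αη₁ ≤ 1`, and hence
`‖s‖² = ‖r‖² + 2⟪r, d⟫ + ‖d‖² ≤ ‖r‖²`.
-/

open Filter Topology

open scoped RealInnerProductSpace

namespace IsAveragedOp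

variable {N : ℕ} {α : ℝ} {T : EuclideanSpace ℝ (Fin N) → EuclideanSpace ℝ (Fin N)}

theorem norm_sq_le_two_mul_inner (hT : IsAveragedOp α T) (hα : 0 < α)
    (x y : EuclideanSpace ℝ (Fin N)) :
    ‖(x - T x) - (y - T y)‖ ^ 2 ≤ 2 * α * ⟪x - y, (x - T x) - (y - T y)⟫ := by
  set d := (x - T x) - (y - T y)
  have h := hT x y
  rw [show T x - T y = (x - y) - d by simp only [d]; abel, norm_sub_sq_real] at h
  have hcoef : α * ((1 - α) / α) = 1 - α := mul_div_cancel₀ _ hα.ne'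
  nlinarith [mul_le_mul_of_nonneg_left h hα.le]

theorem norm_sub_relax_le (hT : IsAveragedOp α T) (hα : 0 < α) {η : ℝ} (hη : 0 < η)
    (hηα : η ≤ 1 / α) {x y : EuclideanSpace ℝ (Fin N)} (hy : y = η • T x + (1 - η) • x) :
    ‖T y - y‖ ≤ ‖T x - x‖ := by
  set r := T x - x
  set d := (T y - y) - r
  have hxy : x - y = -(η • r) := by rw [hy]; simp only [r]; module
  have hd : (x - T x) - (y - T y) = d := by simp only [d, r]; abel
  have hdecr : ‖d‖ ^ 2 ≤ -(2 * (α * η) * ⟪r, d⟫) := by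
    have := hT.norm_sq_le_two_mul_inner hα x y
    rwa [hd, hxy, inner_neg_left, real_inner_smul_left, mul_neg, ← mul_assoc,
      mul_assoc 2] at this
  have hαη : 0 < α * η := mul_pos hα hη
  have hαη1 : α * η ≤ 1 := by rwa [le_div_iff₀ hα, mul_comm] at hηα
  have hexpand : ‖T y - y‖ ^ 2 = ‖r‖ ^ 2 + 2 * ⟪r, d⟫ + ‖d‖ ^ 2 := by
    rw [show T y - y = r + d by simp only [d]; abel, norm_add_sq_real]
  have hcross : 2 * ⟪r, d⟫ + ‖d‖ ^ 2 ≤ 0 := by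
    nlinarith [mul_nonneg (sub_nonneg.2 hαη1) (sq_nonneg ‖d‖)]
  exact (pow_le_pow_iff_left₀ (norm_nonneg _) (norm_nonneg _) two_ne_zero).1 (by linarith)

end IsAveragedOp

theorem stmt_15_general {N : ℕ} {α : ℝ} (hα : α ∈ Set.Ioo (0 : ℝ) 1)
    (T : EuclideanSpace ℝ (Fin N) → EuclideanSpace ℝ (Fin N))
    (hT : IsAveragedOp α T)
    (η₁ η₂ : ℝ) (hη₁ : η₁ ∈ Set.Ioc (0 : ℝ) (1 / α)) (hη₂ : η₂ ∈ Set.Ioc (0 : ℝ) (1 / α))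
    (x y z : EuclideanSpace ℝ (Fin N))
    (hy : y = η₁ • T x + (1 - η₁) • x)
    (hz : z = η₂ • T y + (1 - η₂) • y) :
    ‖z - y‖ ≤ (η₂ / η₁) * ‖y - x‖ := by
  obtain ⟨hη₁0, hη₁α⟩ := hη₁
  have hyx : y - x = η₁ • (T x - x) := by rw [hy]; module
  have hzy : z - y = η₂ • (T y - y) := by rw [hz]; module
  have hres := hT.norm_sub_relax_le hα.1 hη₁0 hη₁α hy
  rw [hyx, hzy, norm_smul, norm_smul, Real.norm_of_nonneg hη₁0.le,
    Real.norm_of_nonneg hη₂.1.le]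
  calc η₂ * ‖T y - y‖ ≤ η₂ * ‖T x - x‖ := mul_le_mul_of_nonneg_left hres hη₂.1.le
    _ = η₂ / η₁ * (η₁ * ‖T x - x‖) := by field_simp

/-- Key estimate for the ORM rate estimator: two successive relaxed steps with parameters
`η₁, η₂ ∈ (0, 1/α]` satisfy `‖z − y‖ ≤ (η₂/η₁) ‖y − x‖`. -/
theorem stmt_15 {N : ℕ} (hN : 1 ≤ N) {α : ℝ} (hα : α ∈ Set.Ioo (0 : ℝ) 1)
    (T : EuclideanSpace ℝ (Fin N) → EuclideanSpace ℝ (Fin N))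
    (hT : IsAveragedOp α T)
    (η₁ η₂ : ℝ) (hη₁ : η₁ ∈ Set.Ioc (0 : ℝ) (1 / α)) (hη₂ : η₂ ∈ Set.Ioc (0 : ℝ) (1 / α))
    (x y z : EuclideanSpace ℝ (Fin N))
    (hy : y = η₁ • T x + (1 - η₁) • x)
    (hz : z = η₂ • T y + (1 - η₂) • y) :
    ‖z - y‖ ≤ (η₂ / η₁) * ‖y - x‖ :=
  stmt_15_general hα T hT η₁ η₂ hη₁ hη₂ x y z hy hz
end

section
/- Let α ∈ (0,1) and ε ∈ (0, 2·min(α, 1−α)]. If v ∈ [0,1] and η ∈ [ε/(4α), 1/α − ε/(4α)], then 2αη + 1 − v > 0 and the updated parameter η' = (2−ε)·η/(2αη + 1 − v) + ε/(4α) again satisfies η' ∈ [ε/(4α), 1/α − ε/(4α)]. -/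
open Filter Topology

/-- Invariance of the ORM parameter update: if `v ∈ [0,1]` and
`η ∈ [ε/(4α), 1/α − ε/(4α)]`, then `2αη + 1 − v > 0` and
`η' = (2−ε)η/(2αη + 1 − v) + ε/(4α)` stays in `[ε/(4α), 1/α − ε/(4α)]`. -/
theorem stmt_16 {α ε : ℝ} (hα : α ∈ Set.Ioo (0 : ℝ) 1)
    (hε : ε ∈ Set.Ioc (0 : ℝ) (2 * min α (1 - α)))
    (v η : ℝ) (hv : v ∈ Set.Icc (0 : ℝ) 1)
    (hη : η ∈ Set.Icc (ε / (4 * α)) (1 / α - ε / (4 * α))) :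
    0 < 2 * α * η + 1 - v ∧
      (2 - ε) * η / (2 * α * η + 1 - v) + ε / (4 * α)
        ∈ Set.Icc (ε / (4 * α)) (1 / α - ε / (4 * α)) := by
  obtain ⟨hα0, hα1⟩ := hα
  obtain ⟨hε0, hε2⟩ := hε
  obtain ⟨hv0, hv1⟩ := hv
  obtain ⟨hη1, hη2⟩ := hη
  have hεα : ε ≤ 2 * α := le_trans hε2 (by nlinarith [min_le_left α (1 - α)])
  have hε2' : ε < 2 := by nlinarith [min_le_right α (1 - α)]
  have hη0 : 0 ≤ η := le_trans (by positivity) hη1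
  have hηε : ε / 2 ≤ 2 * α * η := by
    rw [div_le_iff₀ (by norm_num)]
    have := (div_le_iff₀ (by positivity : (0:ℝ) < 4 * α)).mp hη1
    nlinarith
  have hD : 0 < 2 * α * η + 1 - v := by nlinarith
  refine ⟨hD, ?_, ?_⟩
  · have : 0 ≤ (2 - ε) * η / (2 * α * η + 1 - v) := div_nonneg (mul_nonneg (by linarith) hη0) hD.le
    linarith
  · have key : (2 - ε) * η / (2 * α * η + 1 - v) ≤ (2 - ε) / (2 * α) := by
      rw [div_le_div_iff₀ hD (by positivity)]
      nlinarith
    have heq : 1 / α - ε / (4 * α) = (2 - ε) / (2 * α) + ε / (4 * α) := by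
      field_simp; ring
    linarith [key, heq.ge]
end

section
/- Let N ≥ 1, let α ∈ (0,1), let ε ∈ (0, 2·min(α, 1−α)], and let T : ℝ^N → ℝ^N be an α-averaged operator with Fix T ≠ ∅. Let x₀ ∈ ℝ^N and let the sequences (x_k)_{k≥0} and (η_k)_{k≥1} be given by the Online Relaxation Method: η₁ = η₂ = 1, x₁ = T(x₀), x₂ = T(x₁), and for every k ≥ 2, assuming x_{k−1} ≠ x_{k−2} for all k ≥ 2, η_{k+1} = (2−ε)·η_k/(2α·η_k + 1 − (η_{k−1}·‖x_k − x_{k−1}‖)/(η_k·‖x_{k−1} − x_{k−2}‖)) + ε/(4α) and x_{k+1} = η_{k+1}·T(x_k) + (1−η_{k+1})·x_k. Then (x_k) converges to a point of Fix T. -/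
/-!
Writing `T = (1 - α) I + α S`, the averagedness of `T` says exactly that `S` is nonexpansive,
and the ORM step reads `x_{k+1} = x_k + λ_{k+1} (S x_k - x_k)` with `λ_k = α η_k`: a
Krasnosel'skiĭ–Mann iteration. Along such an iteration the residual `‖S x_k - x_k‖` does not
increase, so the ratio in the ORM rule equals `‖S x_{k-1} - x_{k-1}‖ / ‖S x_{k-2} - x_{k-2}‖ ≤ 1`,
and this keeps every `λ_k` in `[ε/4, 1 - ε/4]`. With the relaxation bounded away from `0` and `1`,
the iterates are Fejér monotone with respect to `Fix S = Fix T` and their residuals are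
square-summable; in finite dimension a cluster point exists, it is fixed, and Fejér monotonicity
upgrades subsequential convergence to convergence.
-/

open Filter Topology

open Set

theorem tendsto_of_antitone_dist_of_subseq {X : Type*} [PseudoMetricSpace X] {x : ℕ → X} {w : X}
    (hanti : Antitone fun k => dist (x k) w) {φ : ℕ → ℕ} (hφ : StrictMono φ)
    (hlim : Tendsto (x ∘ φ) atTop (𝓝 w)) : Tendsto x atTop (𝓝 w) := by
  have hinf : Tendsto (fun k => dist (x k) w) atTop (𝓝 (⨅ k, dist (x k) w)) :=
    tendsto_atTop_ciInf hanti ⟨0, by rintro _ ⟨k, rfl⟩; exact dist_nonneg⟩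
  have hzero : (⨅ k, dist (x k) w) = 0 :=
    tendsto_nhds_unique (hinf.comp hφ.tendsto_atTop) (tendsto_iff_dist_tendsto_zero.1 hlim)
  exact tendsto_iff_dist_tendsto_zero.2 (hzero ▸ hinf)

section Relaxation

variable {E : Type*} [NormedAddCommGroup E] [InnerProductSpace ℝ E] {S : E → E}

theorem lipschitzWith_one_of_averaged_s17 {α : ℝ} (hα : 0 < α) {T : E → E}
    (hT : ∀ x y, ‖T x - T y‖ ^ 2 + ((1 - α) / α) * ‖(x - T x) - (y - T y)‖ ^ 2 ≤ ‖x - y‖ ^ 2) :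
    LipschitzWith 1 (fun ξ => ξ + α⁻¹ • (T ξ - ξ)) := by
  refine LipschitzWith.of_dist_le_mul fun a b => ?_
  rw [NNReal.coe_one, one_mul, dist_eq_norm, dist_eq_norm]
  have h := hT a b
  rw [show T a - T b = (a - b) + ((T a - T b) - (a - b)) by abel,
    show (a - T a) - (b - T b) = -((T a - T b) - (a - b)) by abel, norm_neg,
    show (1 - α) / α = α⁻¹ - 1 by field_simp] at h
  rw [show a + α⁻¹ • (T a - a) - (b + α⁻¹ • (T b - b))
      = (a - b) + α⁻¹ • ((T a - T b) - (a - b)) by module]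
  generalize a - b = u at h ⊢
  generalize (T a - T b) - (a - b) = v at h ⊢
  rw [norm_add_sq_real] at h
  rw [← pow_le_pow_iff_left₀ (norm_nonneg _) (norm_nonneg _) two_ne_zero, norm_add_sq_real,
    inner_smul_right, norm_smul, mul_pow, Real.norm_of_nonneg (inv_pos.2 hα).le]
  nlinarith [mul_le_mul_of_nonneg_left h (inv_pos.2 hα).le]

theorem norm_sub_relax_le (hS : LipschitzWith 1 S) {t : ℝ} (ht₀ : 0 ≤ t) (ht₁ : t ≤ 1) (ξ : E) :
    ‖S (ξ + t • (S ξ - ξ)) - (ξ + t • (S ξ - ξ))‖ ≤ ‖S ξ - ξ‖ := by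
  set ξ' := ξ + t • (S ξ - ξ)
  calc ‖S ξ' - ξ'‖ = ‖(S ξ' - S ξ) + (1 - t) • (S ξ - ξ)‖ := by congr 1; simp only [ξ']; module
    _ ≤ ‖ξ' - ξ‖ + (1 - t) * ‖S ξ - ξ‖ := by
      refine (norm_add_le _ _).trans (add_le_add ?_ ?_)
      · simpa using hS.norm_sub_le ξ' ξ
      · rw [norm_smul, Real.norm_of_nonneg (sub_nonneg.2 ht₁)]
    _ = ‖S ξ - ξ‖ := by
      simp only [ξ', add_sub_cancel_left, norm_smul, Real.norm_of_nonneg ht₀]; ring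

theorem norm_relax_sub_sq_le (hS : LipschitzWith 1 S) {z : E} (hz : S z = z) {t : ℝ}
    (ht : 0 ≤ t) (ξ : E) :
    ‖ξ + t • (S ξ - ξ) - z‖ ^ 2 ≤ ‖ξ - z‖ ^ 2 - t * (1 - t) * ‖S ξ - ξ‖ ^ 2 := by
  have hne : ‖(ξ - z) + (S ξ - ξ)‖ ≤ ‖ξ - z‖ := by
    simpa [hz] using hS.norm_sub_le ξ z
  have hinner : 2 * inner ℝ (ξ - z) (S ξ - ξ) ≤ -‖S ξ - ξ‖ ^ 2 := by
    have := pow_le_pow_left₀ (norm_nonneg _) hne 2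
    rw [norm_add_sq_real] at this
    linarith
  rw [show ξ + t • (S ξ - ξ) - z = (ξ - z) + t • (S ξ - ξ) by abel, norm_add_sq_real,
    inner_smul_right, norm_smul, mul_pow, Real.norm_of_nonneg ht]
  nlinarith [mul_le_mul_of_nonneg_left hinner ht]

variable {x : ℕ → E} {t : ℕ → ℝ}

theorem antitone_dist_relax (hS : LipschitzWith 1 S) {z : E} (hz : S z = z)
    (ht : ∀ k, t k ∈ Icc 0 1) (hx : ∀ k, x (k + 1) = x k + t k • (S (x k) - x k)) :
    Antitone fun k => dist (x k) z := by
  refine antitone_nat_of_succ_le fun k => ?_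
  rw [dist_eq_norm, dist_eq_norm, hx,
    ← pow_le_pow_iff_left₀ (norm_nonneg _) (norm_nonneg _) two_ne_zero]
  have hdecr : 0 ≤ t k * (1 - t k) * ‖S (x k) - x k‖ ^ 2 :=
    mul_nonneg (mul_nonneg (ht k).1 (sub_nonneg.2 (ht k).2)) (sq_nonneg _)
  linarith [norm_relax_sub_sq_le hS hz (ht k).1 (x k)]

theorem tendsto_norm_sub_relax_zero (hS : LipschitzWith 1 S) {z : E} (hz : S z = z) {δ : ℝ}
    (hδ : 0 < δ) (ht : ∀ k, t k ∈ Icc δ (1 - δ))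
    (hx : ∀ k, x (k + 1) = x k + t k • (S (x k) - x k)) :
    Tendsto (fun k => ‖S (x k) - x k‖) atTop (𝓝 0) := by
  set a : ℕ → ℝ := fun k => ‖x k - z‖ ^ 2
  have ht01 : ∀ k, t k ∈ Icc 0 1 := fun k => ⟨hδ.le.trans (ht k).1, (ht k).2.trans (by linarith)⟩
  have hanti : Antitone a := fun m n hmn => by
    have := antitone_dist_relax hS hz ht01 hx hmn
    simp only [dist_eq_norm] at this
    exact pow_le_pow_left₀ (norm_nonneg _) this 2
  have hlim := tendsto_atTop_ciInf hanti ⟨0, by rintro _ ⟨k, rfl⟩; positivity⟩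
  have hdiff : Tendsto (fun k => (a k - a (k + 1)) / δ ^ 2) atTop (𝓝 0) := by
    simpa using (hlim.sub (hlim.comp (tendsto_add_atTop_nat 1))).div_const (δ ^ 2)
  refine squeeze_zero (fun _ => norm_nonneg _) (fun k => ?_) (by simpa using hdiff.sqrt)
  refine Real.le_sqrt_of_sq_le ((le_div_iff₀ (by positivity)).2 ?_)
  have hfejer : a (k + 1) ≤ a k - t k * (1 - t k) * ‖S (x k) - x k‖ ^ 2 := by
    simpa only [a, hx] using norm_relax_sub_sq_le hS hz (ht01 k).1 (x k)
  have hδt : δ ^ 2 ≤ t k * (1 - t k) := by nlinarith [(ht k).1, (ht k).2]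
  nlinarith [mul_le_mul_of_nonneg_right hδt (sq_nonneg ‖S (x k) - x k‖)]

theorem exists_fixedPoint_tendsto_relax [ProperSpace E] (hS : LipschitzWith 1 S)
    (hfix : ∃ z, S z = z) {δ : ℝ} (hδ : 0 < δ) (ht : ∀ k, t k ∈ Icc δ (1 - δ))
    (hx : ∀ k, x (k + 1) = x k + t k • (S (x k) - x k)) :
    ∃ xbar, S xbar = xbar ∧ Tendsto x atTop (𝓝 xbar) := by
  obtain ⟨z, hz⟩ := hfix
  have ht01 : ∀ k, t k ∈ Icc 0 1 := fun k => ⟨hδ.le.trans (ht k).1, (ht k).2.trans (by linarith)⟩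
  obtain ⟨xbar, -, φ, hφ, hsub⟩ := tendsto_subseq_of_bounded
    (Metric.isBounded_closedBall (x := z) (r := dist (x 0) z))
    fun k => antitone_dist_relax hS hz ht01 hx (Nat.zero_le k)
  have hxbar : S xbar = xbar := by
    have hres : Tendsto (fun k => ‖S (x (φ k)) - x (φ k)‖) atTop (𝓝 ‖S xbar - xbar‖) :=
      ((hS.continuous.sub continuous_id).norm.tendsto xbar).comp hsub
    rw [← sub_eq_zero, ← norm_eq_zero]
    exact tendsto_nhds_unique hres
      ((tendsto_norm_sub_relax_zero hS hz hδ ht hx).comp hφ.tendsto_atTop)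
  exact ⟨xbar, hxbar,
    tendsto_of_antitone_dist_of_subseq (antitone_dist_relax hS hxbar ht01 hx) hφ hsub⟩

end Relaxation

theorem orm_relaxation_mem_Icc_of_ratio {α ε η q : ℝ} (hα : 0 < α) (hε : ε ≤ 2) (hη : 0 ≤ η)
    (hq : q ∈ Icc 0 1) :
    α * ((2 - ε) * η / (2 * α * η + 1 - q) + ε / (4 * α)) ∈ Icc (ε / 4) (1 - ε / 4) := by
  have hD : 2 * α * η ≤ 2 * α * η + 1 - q := by linarith [hq.2]
  have hD₀ : 0 ≤ 2 * α * η + 1 - q := le_trans (by positivity) hD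
  rw [mul_add, mul_div_assoc', show α * (ε / (4 * α)) = ε / 4 by field_simp]
  have hfrac : α * ((2 - ε) * η) / (2 * α * η + 1 - q) ≤ (2 - ε) / 2 :=
    div_le_of_le_mul₀ hD₀ (by linarith) (by nlinarith)
  have hnum : 0 ≤ α * ((2 - ε) * η) / (2 * α * η + 1 - q) :=
    div_nonneg (mul_nonneg hα.le (mul_nonneg (by linarith) hη)) hD₀
  exact ⟨by linarith, by linarith⟩

section ORM

variable {E : Type*} [NormedAddCommGroup E] [InnerProductSpace ℝ E] {S : E → E} {α : ℝ}
  {x : ℕ → E} {η : ℕ → ℝ}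

theorem orm_ratio_mem_Icc (hS : LipschitzWith 1 S) (hα : 0 ≤ α)
    (hx : ∀ k, x (k + 1) = x k + (α * η (k + 1)) • (S (x k) - x k)) {n : ℕ}
    (h₁ : 0 ≤ η (n + 1)) (h₁' : α * η (n + 1) ≤ 1) (h₂ : 0 ≤ η (n + 2)) :
    η (n + 1) * ‖x (n + 2) - x (n + 1)‖ / (η (n + 2) * ‖x (n + 1) - x n‖) ∈ Icc 0 1 := by
  have hdist : ∀ k, 0 ≤ η (k + 1) → ‖x (k + 1) - x k‖ = α * η (k + 1) * ‖S (x k) - x k‖ :=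
    fun k hk => by rw [hx k, add_sub_cancel_left, norm_smul, Real.norm_of_nonneg (mul_nonneg hα hk)]
  have hres : ‖S (x (n + 1)) - x (n + 1)‖ ≤ ‖S (x n) - x n‖ := by
    rw [hx n]; exact norm_sub_relax_le hS (mul_nonneg hα h₁) h₁' (x n)
  set c := α * η (n + 1) * η (n + 2)
  have hc : 0 ≤ c := mul_nonneg (mul_nonneg hα h₁) h₂
  rw [hdist (n + 1) h₂, hdist n h₁,
    show η (n + 1) * (α * η (n + 1 + 1) * ‖S (x (n + 1)) - x (n + 1)‖)
        / (η (n + 2) * (α * η (n + 1) * ‖S (x n) - x n‖))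
      = c * ‖S (x (n + 1)) - x (n + 1)‖ / (c * ‖S (x n) - x n‖) by ring]
  have hc₀ : 0 ≤ c * ‖S (x n) - x n‖ := mul_nonneg hc (norm_nonneg _)
  exact ⟨div_nonneg (mul_nonneg hc (norm_nonneg _)) hc₀,
    div_le_one_of_le₀ (mul_le_mul_of_nonneg_left hres hc) hc₀⟩

theorem orm_relaxation_mem_Icc (hS : LipschitzWith 1 S) {ε : ℝ} (hα : 0 < α) (hε : 0 ≤ ε)
    (hη₁ : α * η 1 ∈ Icc (ε / 4) (1 - ε / 4)) (hη₂ : α * η 2 ∈ Icc (ε / 4) (1 - ε / 4))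
    (hx : ∀ k, x (k + 1) = x k + (α * η (k + 1)) • (S (x k) - x k))
    (hη : ∀ n, η (n + 3) = (2 - ε) * η (n + 2)
        / (2 * α * η (n + 2) + 1 - η (n + 1) * ‖x (n + 2) - x (n + 1)‖
          / (η (n + 2) * ‖x (n + 1) - x n‖)) + ε / (4 * α)) :
    ∀ k, α * η (k + 1) ∈ Icc (ε / 4) (1 - ε / 4) := by
  have hη_nonneg : ∀ k, α * η k ∈ Icc (ε / 4) (1 - ε / 4) → 0 ≤ η k := fun k hk =>
    (mul_nonneg_iff_of_pos_left hα).1 ((by positivity : 0 ≤ ε / 4).trans hk.1)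
  refine Nat.twoStepInduction hη₁ hη₂ fun n ih₁ ih₂ => ?_
  show α * η (n + 3) ∈ _
  rw [hη n]
  exact orm_relaxation_mem_Icc_of_ratio hα (by linarith [ih₁.1, ih₁.2]) (hη_nonneg _ ih₂)
    (orm_ratio_mem_Icc hS hα.le hx (hη_nonneg _ ih₁) (ih₁.2.trans (by linarith))
      (hη_nonneg _ ih₂))

end ORM

theorem stmt_17_general {N : ℕ} {α ε : ℝ} (hα : α ∈ Set.Ioo (0 : ℝ) 1)
    (hε : ε ∈ Set.Ioc (0 : ℝ) (2 * min α (1 - α)))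
    (T : EuclideanSpace ℝ (Fin N) → EuclideanSpace ℝ (Fin N))
    (hT : IsAveragedOp α T) (hfix : ∃ z, T z = z)
    (x : ℕ → EuclideanSpace ℝ (Fin N)) (η : ℕ → ℝ)
    (hη1 : η 1 = 1) (hη2 : η 2 = 1)
    (hx1 : x 1 = T (x 0)) (hx2 : x 2 = T (x 1))
    (hηrec : ∀ k : ℕ, 2 ≤ k →
      η (k + 1) = (2 - ε) * η k
          / (2 * α * η k + 1 - (η (k - 1) * ‖x k - x (k - 1)‖) / (η k * ‖x (k - 1) - x (k - 2)‖))
        + ε / (4 * α))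
    (hxrec : ∀ k : ℕ, 2 ≤ k → x (k + 1) = η (k + 1) • T (x k) + (1 - η (k + 1)) • x k) :
    ∃ xbar, T xbar = xbar ∧ Tendsto x atTop (𝓝 xbar) := by
  obtain ⟨hα₀, -⟩ := hα
  obtain ⟨hε₀, hεα⟩ := hε
  set S := fun ξ => ξ + α⁻¹ • (T ξ - ξ)
  have hS : LipschitzWith 1 S := lipschitzWith_one_of_averaged_s17 hα₀ hT
  have hTS : ∀ ξ, T ξ = ξ + α • (S ξ - ξ) := fun ξ => by
    simp [S, smul_smul, hα₀.ne']
  have hfixS : ∀ ξ, S ξ = ξ ↔ T ξ = ξ := fun ξ => by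
    simp [S, hα₀.ne', sub_eq_zero]
  have hstep : ∀ k, x (k + 1) = x k + (α * η (k + 1)) • (S (x k) - x k) := by
    rintro (_ | _ | k)
    · rw [hx1, hTS, hη1, mul_one]
    · rw [hx2, hTS, hη2, mul_one]
    · rw [hxrec (k + 2) (by omega), hTS]; module
  have hαI : α ∈ Icc (ε / 4) (1 - ε / 4) :=
    ⟨by linarith [min_le_left α (1 - α)], by linarith [min_le_right α (1 - α)]⟩
  have hrelax := orm_relaxation_mem_Icc hS hα₀ hε₀.le (by rwa [hη1, mul_one])
    (by rwa [hη2, mul_one]) hstep fun n => hηrec (n + 2) (by omega)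
  obtain ⟨xbar, hxbar, hlim⟩ := exists_fixedPoint_tendsto_relax hS
    (hfix.imp fun z => (hfixS z).2) (by positivity) hrelax hstep
  exact ⟨xbar, (hfixS xbar).1 hxbar, hlim⟩

/-- Convergence of the Online Relaxation Method (ORM): the relaxed iterates with
online-tuned relaxation parameters converge to a fixed point of `T`. -/
theorem stmt_17 {N : ℕ} (hN : 1 ≤ N) {α ε : ℝ} (hα : α ∈ Set.Ioo (0 : ℝ) 1)
    (hε : ε ∈ Set.Ioc (0 : ℝ) (2 * min α (1 - α)))
    (T : EuclideanSpace ℝ (Fin N) → EuclideanSpace ℝ (Fin N))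
    (hT : IsAveragedOp α T) (hfix : ∃ z, T z = z)
    (x₀ : EuclideanSpace ℝ (Fin N)) (x : ℕ → EuclideanSpace ℝ (Fin N)) (η : ℕ → ℝ)
    (hx0 : x 0 = x₀) (hη1 : η 1 = 1) (hη2 : η 2 = 1)
    (hx1 : x 1 = T (x 0)) (hx2 : x 2 = T (x 1))
    (hne : ∀ k : ℕ, 2 ≤ k → x (k - 1) ≠ x (k - 2))
    (hηrec : ∀ k : ℕ, 2 ≤ k →
      η (k + 1) = (2 - ε) * η k
          / (2 * α * η k + 1 - (η (k - 1) * ‖x k - x (k - 1)‖) / (η k * ‖x (k - 1) - x (k - 2)‖))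
        + ε / (4 * α))
    (hxrec : ∀ k : ℕ, 2 ≤ k → x (k + 1) = η (k + 1) • T (x k) + (1 - η (k + 1)) • x k) :
    ∃ xbar, T xbar = xbar ∧ Tendsto x atTop (𝓝 xbar) :=
  stmt_17_general hα hε T hT hfix x η hη1 hη2 hx1 hx2 hηrec hxrec
end

section
/- Let N ≥ 1, let α ∈ (0,1), let T : ℝ^N → ℝ^N be an α-averaged operator with Fix T ≠ ∅, and let ε ∈ (0,1). Let (y_k)_{k≥0} be a sequence in ℝ^N such that for every k, at least one of the following holds: (A) ‖T(y_{k+1}) − y_{k+1}‖ ≤ (1−ε)·‖T(y_k) − y_k‖ (a successful accelerated step), or (B) y_{k+1} = T(y_k) (an unaccelerated step). Then ‖T(y_k) − y_k‖ → 0 as k → ∞. -/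
open Filter Topology

lemma aux_fejer (c : ℝ) (hc : 0 < c) (a b : ℕ → ℝ)
    (hb : ∀ n, 0 ≤ b n) (hbm : ∀ n, b (n + 1) ≤ b n)
    (hstep : ∀ n, a (n + 1) + c * b n ^ 2 ≤ a n) (ha : ∀ n, 0 ≤ a n) :
    ∀ n : ℕ, c * (n : ℝ) * b n ^ 2 ≤ a 0 := by
  have key : ∀ n : ℕ, a n + c * (n : ℝ) * b n ^ 2 ≤ a 0 := by
    intro n
    induction n with
    | zero => simp
    | succ n ih =>
      have hsq : b (n + 1) ^ 2 ≤ b n ^ 2 := by nlinarith [hb n, hb (n + 1), hbm n]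
      have h1 : c * (n : ℝ) * b (n + 1) ^ 2 ≤ c * (n : ℝ) * b n ^ 2 :=
        mul_le_mul_of_nonneg_left hsq (mul_nonneg hc.le (Nat.cast_nonneg n))
      have h2 : c * b (n + 1) ^ 2 ≤ c * b n ^ 2 := mul_le_mul_of_nonneg_left hsq hc.le
      have h3 : c * ((n : ℝ) + 1) * b (n + 1) ^ 2
          = c * (n : ℝ) * b (n + 1) ^ 2 + c * b (n + 1) ^ 2 := by ring
      have h4 := hstep n
      push_cast
      linarith
  intro n
  linarith [key n, ha n]

/-- Residual convergence for the Online Inertia Method: if every step either contracts the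
residual `‖T y − y‖` by the factor `1 − ε` or is a plain fixed-point step, then the
residual tends to `0`. -/
theorem stmt_18 {N : ℕ} (hN : 1 ≤ N) {α : ℝ} (hα : α ∈ Set.Ioo (0 : ℝ) 1)
    (T : EuclideanSpace ℝ (Fin N) → EuclideanSpace ℝ (Fin N))
    (hT : IsAveragedOp α T) (hfix : ∃ z, T z = z)
    (ε : ℝ) (hε : ε ∈ Set.Ioo (0 : ℝ) 1)
    (y : ℕ → EuclideanSpace ℝ (Fin N))
    (hstep : ∀ k : ℕ,
      ‖T (y (k + 1)) - y (k + 1)‖ ≤ (1 - ε) * ‖T (y k) - y k‖ ∨ y (k + 1) = T (y k)) :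
    Tendsto (fun k : ℕ => ‖T (y k) - y k‖) atTop (𝓝 0) := by
  obtain ⟨z, hz⟩ := hfix
  obtain ⟨hα0, hα1⟩ := hα
  obtain ⟨hε0, hε1⟩ := hε
  have hcpos : 0 < (1 - α) / α := div_pos (by linarith) hα0
  set r : ℕ → ℝ := fun k => ‖T (y k) - y k‖ with hr
  have hrnn : ∀ k, 0 ≤ r k := fun k => norm_nonneg _
  have hmono : ∀ k, r (k + 1) ≤ r k := by
    intro k
    rcases hstep k with h | h
    · calc r (k + 1) ≤ (1 - ε) * r k := h
        _ ≤ 1 * r k := by nlinarith [hrnn k]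
        _ = r k := one_mul _
    · have key := hT (y k) (y (k + 1))
      rw [h] at key
      have hn1 : ‖T (y k) - T (T (y k))‖ = ‖T (T (y k)) - T (y k)‖ := norm_sub_rev _ _
      have hn2 : ‖y k - T (y k)‖ = ‖T (y k) - y k‖ := norm_sub_rev _ _
      rw [hn1, hn2] at key
      have hsq : r (k + 1) ^ 2 ≤ r k ^ 2 := by
        show ‖T (y (k + 1)) - y (k + 1)‖ ^ 2 ≤ ‖T (y k) - y k‖ ^ 2
        rw [h]
        nlinarith [key, mul_nonneg hcpos.le
          (sq_nonneg ‖(y k - T (y k)) - (T (y k) - T (T (y k)))‖)]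
      nlinarith [hrnn k, hrnn (k + 1)]
  have hant : Antitone r := antitone_nat_of_succ_le hmono
  have hbdd : BddBelow (Set.range r) := ⟨0, by rintro - ⟨k, rfl⟩; exact hrnn k⟩
  have hlim : Tendsto r atTop (𝓝 (⨅ n, r n)) := tendsto_atTop_ciInf hant hbdd
  set L : ℝ := ⨅ n, r n with hL
  have hL0 : 0 ≤ L := le_ciInf hrnn
  have hLle : ∀ n, L ≤ r n := fun n => ciInf_le hbdd n
  suffices hL0' : L = 0 by exact hL0' ▸ hlim
  by_cases hA : ∃ᶠ k in atTop, r (k + 1) ≤ (1 - ε) * r k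
  · obtain ⟨φ, hφ, hφA⟩ := Filter.extraction_of_frequently_atTop hA
    have htend : Tendsto (fun n => (1 - ε) * r (φ n)) atTop (𝓝 ((1 - ε) * L)) :=
      (hlim.comp hφ.tendsto_atTop).const_mul _
    have hle : L ≤ (1 - ε) * L := by
      refine ge_of_tendsto htend (Eventually.of_forall fun n => ?_)
      exact le_trans (hLle (φ n + 1)) (hφA n)
    nlinarith
  · -- eventually plain fixed-point steps
    have hB : ∀ᶠ k in atTop, y (k + 1) = T (y k) := by
      filter_upwards [Filter.not_frequently.mp hA] with k hk
      rcases hstep k with h | h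
      · exact absurd h hk
      · exact h
    obtain ⟨K, hK⟩ := eventually_atTop.mp hB
    have fej : ∀ n : ℕ, ‖y (K + n + 1) - z‖ ^ 2 + (1 - α) / α * r (K + n) ^ 2
        ≤ ‖y (K + n) - z‖ ^ 2 := by
      intro n
      have h := hT (y (K + n)) z
      rw [hz, sub_self, sub_zero] at h
      rw [hK (K + n) (Nat.le_add_right _ _)]
      have hn : ‖y (K + n) - T (y (K + n))‖ = ‖T (y (K + n)) - y (K + n)‖ :=
        norm_sub_rev _ _
      rw [hn] at h
      simp only [hr]
      exact h
    have key := aux_fejer ((1 - α) / α) hcpos (fun n => ‖y (K + n) - z‖ ^ 2)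
      (fun n => r (K + n)) (fun n => hrnn _)
      (fun n => hmono (K + n))
      (fun n => fej n)
      (fun n => sq_nonneg _)
    by_contra hLne
    have hLpos : 0 < L := lt_of_le_of_ne hL0 (Ne.symm hLne)
    obtain ⟨n, hn⟩ := exists_nat_gt ((‖y (K + 0) - z‖ ^ 2) / ((1 - α) / α * L ^ 2))
    have hcL : 0 < (1 - α) / α * L ^ 2 := mul_pos hcpos (by positivity)
    have h1 : (1 - α) / α * (n : ℝ) * L ^ 2 ≤ ‖y (K + 0) - z‖ ^ 2 := by
      have hk := key n
      have hLr : L ≤ r (K + n) := hLle (K + n)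
      have hsq : L ^ 2 ≤ r (K + n) ^ 2 := by nlinarith
      have := mul_le_mul_of_nonneg_left hsq
        (mul_nonneg hcpos.le (Nat.cast_nonneg n) :
          (0:ℝ) ≤ (1 - α) / α * (n : ℝ))
      calc (1 - α) / α * (n : ℝ) * L ^ 2 ≤ (1 - α) / α * (n : ℝ) * r (K + n) ^ 2 := this
        _ ≤ ‖y (K + 0) - z‖ ^ 2 := hk
    have h2 : ‖y (K + 0) - z‖ ^ 2 < (n : ℝ) * ((1 - α) / α * L ^ 2) :=
      (div_lt_iff₀ hcL).mp hn
    nlinarith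
end
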